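/- arXiv:math/0506570 — 2 statements merged into one kernel-verified Lean document; each statement's English description precedes it below -/
import Mathlib

section
/- Let H be a quasi-Hopf algebra, 𝒜 an H-bimodule algebra, and 𝔸 an H-bicomodule algebra. View 𝒜 as a left H⊗H^op-module algebra via (h⊗h')·φ = h·φ·h', and let 𝔸₁ = (𝔸, λ₁, Φ_{λ₁}) and 𝔸₂ = (𝔸, λ₂, Φ_{λ₂}) be the two left H⊗H^op-comodule algebra structures on 𝔸. Then the trivial identifications of underlying vector spaces give algebra isomorphisms 𝒜⋈𝔸 ≅ 𝒜▸<𝔸₁ and 𝒜⧓𝔸 ≅ 𝒜▸<𝔸₂, where ▸< denotes the generalized smash product over the quasi-bialgebra H⊗H^op. -/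
open scoped TensorProduct

set_option maxHeartbeats 2000000
set_option synthInstance.maxHeartbeats 1000000

noncomputable section

namespace QHA

section Instances
variable (k : Type*) [Field k]
variable (A B C D E F G : Type*)
  [Ring A] [Algebra k A] [Ring B] [Algebra k B] [Ring C] [Algebra k C]
  [Ring D] [Algebra k D] [Ring E] [Algebra k E] [Ring F] [Algebra k F]
  [Ring G] [Algebra k G]

noncomputable scoped instance ring5 : Ring (A ⊗[k] (B ⊗[k] (C ⊗[k] (D ⊗[k] (E))))) :=
  letI i : Ring (B ⊗[k] (C ⊗[k] (D ⊗[k] (E)))) := inferInstance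
  letI a : Algebra k (B ⊗[k] (C ⊗[k] (D ⊗[k] (E)))) := inferInstance
  inferInstance

noncomputable scoped instance alg5 : Algebra k (A ⊗[k] (B ⊗[k] (C ⊗[k] (D ⊗[k] (E))))) :=
  letI i : Ring (B ⊗[k] (C ⊗[k] (D ⊗[k] (E)))) := inferInstance
  letI a : Algebra k (B ⊗[k] (C ⊗[k] (D ⊗[k] (E)))) := inferInstance
  inferInstance

noncomputable scoped instance ring6 : Ring (A ⊗[k] (B ⊗[k] (C ⊗[k] (D ⊗[k] (E ⊗[k] (F)))))) :=
  letI i : Ring (B ⊗[k] (C ⊗[k] (D ⊗[k] (E ⊗[k] (F))))) := ring5 k B C D E F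
  letI a : Algebra k (B ⊗[k] (C ⊗[k] (D ⊗[k] (E ⊗[k] (F))))) := alg5 k B C D E F
  inferInstance

noncomputable scoped instance alg6 : Algebra k (A ⊗[k] (B ⊗[k] (C ⊗[k] (D ⊗[k] (E ⊗[k] (F)))))) :=
  letI i : Ring (B ⊗[k] (C ⊗[k] (D ⊗[k] (E ⊗[k] (F))))) := ring5 k B C D E F
  letI a : Algebra k (B ⊗[k] (C ⊗[k] (D ⊗[k] (E ⊗[k] (F))))) := alg5 k B C D E F
  inferInstance

noncomputable scoped instance ring7 : Ring (A ⊗[k] (B ⊗[k] (C ⊗[k] (D ⊗[k] (E ⊗[k] (F ⊗[k] (G))))))) :=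
  letI i : Ring (B ⊗[k] (C ⊗[k] (D ⊗[k] (E ⊗[k] (F ⊗[k] (G)))))) := ring6 k B C D E F G
  letI a : Algebra k (B ⊗[k] (C ⊗[k] (D ⊗[k] (E ⊗[k] (F ⊗[k] (G)))))) := alg6 k B C D E F G
  inferInstance

noncomputable scoped instance alg7 : Algebra k (A ⊗[k] (B ⊗[k] (C ⊗[k] (D ⊗[k] (E ⊗[k] (F ⊗[k] (G))))))) :=
  letI i : Ring (B ⊗[k] (C ⊗[k] (D ⊗[k] (E ⊗[k] (F ⊗[k] (G)))))) := ring6 k B C D E F G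
  letI a : Algebra k (B ⊗[k] (C ⊗[k] (D ⊗[k] (E ⊗[k] (F ⊗[k] (G)))))) := alg6 k B C D E F G
  inferInstance

end Instances

section Structures

variable (k H : Type*) [Field k] [Ring H] [Algebra k H]

/-- A quasi-bialgebra, with all axioms stated in terms of finite
representations of the relevant tensors as sums of pure tensors. -/
structure QuasiBialgebra where
  comul : H →ₐ[k] H ⊗[k] H
  counit : H →ₐ[k] k
  Phi : H ⊗[k] (H ⊗[k] (H))
  PhiInv : H ⊗[k] (H ⊗[k] (H))
  Phi_mul_inv : Phi * PhiInv = 1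
  Phi_inv_mul : PhiInv * Phi = 1
  quasi_coassoc :
    ∀ (h : H) (n : ℕ) (a b : Fin n → H),
      comul h = ∑ i, a i ⊗ₜ[k] b i →
      ∀ (m : ℕ) (c1 c2 : Fin n → Fin m → H),
        (∀ i, comul (a i) = ∑ j, c1 i j ⊗ₜ[k] c2 i j) →
        (∑ i, a i ⊗ₜ[k] comul (b i))
          = Phi * (∑ i, ∑ j, c1 i j ⊗ₜ[k] (c2 i j ⊗ₜ[k] b i)) * PhiInv
  counit_comul_left :
    ∀ (h : H) (n : ℕ) (a b : Fin n → H),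
      comul h = ∑ i, a i ⊗ₜ[k] b i → (∑ i, counit (a i) • b i) = h
  counit_comul_right :
    ∀ (h : H) (n : ℕ) (a b : Fin n → H),
      comul h = ∑ i, a i ⊗ₜ[k] b i → (∑ i, counit (b i) • a i) = h
  pentagon :
    ∀ (n : ℕ) (X1 X2 X3 : Fin n → H),
      Phi = ∑ i, X1 i ⊗ₜ[k] (X2 i ⊗ₜ[k] X3 i) →
      ∀ (m : ℕ) (c1 c2 : Fin n → Fin m → H),
        (∀ i, comul (X2 i) = ∑ j, c1 i j ⊗ₜ[k] c2 i j) →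
      ∀ (p : ℕ) (d1 d2 : Fin n → Fin p → H),
        (∀ i, comul (X1 i) = ∑ j, d1 i j ⊗ₜ[k] d2 i j) →
        ((1 : H) ⊗ₜ[k] Phi)
          * (∑ i, ∑ j, X1 i ⊗ₜ[k] (c1 i j ⊗ₜ[k] (c2 i j ⊗ₜ[k] X3 i)))
          * (∑ i, X1 i ⊗ₜ[k] (X2 i ⊗ₜ[k] (X3 i ⊗ₜ[k] (1 : H))))
        = (∑ i, X1 i ⊗ₜ[k] (X2 i ⊗ₜ[k] comul (X3 i)))
          * (∑ i, ∑ j, d1 i j ⊗ₜ[k] (d2 i j ⊗ₜ[k] (X2 i ⊗ₜ[k] X3 i)))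
  Phi_normal :
    ∀ (n : ℕ) (X1 X2 X3 : Fin n → H),
      Phi = ∑ i, X1 i ⊗ₜ[k] (X2 i ⊗ₜ[k] X3 i) →
      (∑ i, counit (X2 i) • (X1 i ⊗ₜ[k] X3 i)) = (1 : H ⊗[k] H)

/-- A quasi-Hopf algebra. -/
structure QuasiHopfAlgebra extends QuasiBialgebra k H where
  antipode : H →ₗ[k] H
  antipodeInv : H →ₗ[k] H
  antipodeInv_antipode : ∀ h : H, antipodeInv (antipode h) = h
  antipode_antipodeInv : ∀ h : H, antipode (antipodeInv h) = h
  antipode_mul : ∀ a b : H, antipode (a * b) = antipode b * antipode a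
  antipode_one : antipode 1 = 1
  elA : H
  elB : H
  antipode_ax1 : ∀ (h : H) (n : ℕ) (a b : Fin n → H),
      comul h = ∑ i, a i ⊗ₜ[k] b i →
      (∑ i, antipode (a i) * elA * b i) = counit h • elA
  antipode_ax2 : ∀ (h : H) (n : ℕ) (a b : Fin n → H),
      comul h = ∑ i, a i ⊗ₜ[k] b i →
      (∑ i, a i * elB * antipode (b i)) = counit h • elB
  antipode_ax3 : ∀ (n : ℕ) (X1 X2 X3 : Fin n → H),
      Phi = ∑ i, X1 i ⊗ₜ[k] (X2 i ⊗ₜ[k] X3 i) →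
      (∑ i, X1 i * elB * antipode (X2 i) * elA * X3 i) = 1
  antipode_ax4 : ∀ (n : ℕ) (x1 x2 x3 : Fin n → H),
      PhiInv = ∑ i, x1 i ⊗ₜ[k] (x2 i ⊗ₜ[k] x3 i) →
      (∑ i, antipode (x1 i) * elA * x2 i * elB * antipode (x3 i)) = 1

end Structures

section ModuleAlgebras

variable {k H : Type*} [Field k] [Ring H] [Algebra k H]

/-- A left module algebra over a quasi-bialgebra. -/
structure LeftModuleAlgebra (Q : QuasiBialgebra k H) (A : Type*)
    [AddCommGroup A] [Module k A] where
  act : H →ₗ[k] A →ₗ[k] A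
  one : A
  mul : A →ₗ[k] A →ₗ[k] A
  one_act : ∀ a : A, act 1 a = a
  mul_act : ∀ (g h : H) (a : A), act (g * h) a = act g (act h a)
  mulOne : ∀ a : A, mul a one = a
  oneMul : ∀ a : A, mul one a = a
  quasi_assoc : ∀ (a b c : A) (n : ℕ) (X1 X2 X3 : Fin n → H),
      Q.Phi = ∑ i, X1 i ⊗ₜ[k] (X2 i ⊗ₜ[k] X3 i) →
      mul (mul a b) c = ∑ i, mul (act (X1 i) a) (mul (act (X2 i) b) (act (X3 i) c))
  act_distrib : ∀ (h : H) (a b : A) (n : ℕ) (d1 d2 : Fin n → H),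
      Q.comul h = ∑ i, d1 i ⊗ₜ[k] d2 i →
      act h (mul a b) = ∑ i, mul (act (d1 i) a) (act (d2 i) b)
  act_unit : ∀ h : H, act h one = Q.counit h • one

/-- A right module algebra over a quasi-bialgebra. -/
structure RightModuleAlgebra (Q : QuasiBialgebra k H) (B : Type*)
    [AddCommGroup B] [Module k B] where
  act : B →ₗ[k] H →ₗ[k] B
  one : B
  mul : B →ₗ[k] B →ₗ[k] B
  act_one : ∀ b : B, act b 1 = b
  act_mul : ∀ (b : B) (g h : H), act b (g * h) = act (act b g) h
  mulOne : ∀ b : B, mul b one = b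
  oneMul : ∀ b : B, mul one b = b
  quasi_assoc : ∀ (a b c : B) (n : ℕ) (x1 x2 x3 : Fin n → H),
      Q.PhiInv = ∑ i, x1 i ⊗ₜ[k] (x2 i ⊗ₜ[k] x3 i) →
      mul (mul a b) c = ∑ i, mul (act a (x1 i)) (mul (act b (x2 i)) (act c (x3 i)))
  act_distrib : ∀ (h : H) (a b : B) (n : ℕ) (d1 d2 : Fin n → H),
      Q.comul h = ∑ i, d1 i ⊗ₜ[k] d2 i →
      act (mul a b) h = ∑ i, mul (act a (d1 i)) (act b (d2 i))
  act_unit : ∀ h : H, act one h = Q.counit h • one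

/-- An `H`-bimodule algebra over a quasi-bialgebra. -/
structure BimoduleAlgebra (Q : QuasiBialgebra k H) (M : Type*)
    [AddCommGroup M] [Module k M] where
  actL : H →ₗ[k] M →ₗ[k] M
  actR : M →ₗ[k] H →ₗ[k] M
  one : M
  mul : M →ₗ[k] M →ₗ[k] M
  one_actL : ∀ m : M, actL 1 m = m
  mul_actL : ∀ (g h : H) (m : M), actL (g * h) m = actL g (actL h m)
  actR_one : ∀ m : M, actR m 1 = m
  actR_mul : ∀ (m : M) (g h : H), actR m (g * h) = actR (actR m g) h
  act_comm : ∀ (g : H) (m : M) (h : H), actR (actL g m) h = actL g (actR m h)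
  mulOne : ∀ m : M, mul m one = m
  oneMul : ∀ m : M, mul one m = m
  quasi_assoc : ∀ (a b c : M) (n : ℕ) (X1 X2 X3 : Fin n → H),
      Q.Phi = ∑ i, X1 i ⊗ₜ[k] (X2 i ⊗ₜ[k] X3 i) →
      ∀ (m : ℕ) (x1 x2 x3 : Fin m → H),
      Q.PhiInv = ∑ j, x1 j ⊗ₜ[k] (x2 j ⊗ₜ[k] x3 j) →
      mul (mul a b) c = ∑ i, ∑ j, mul (actR (actL (X1 i) a) (x1 j))
        (mul (actR (actL (X2 i) b) (x2 j)) (actR (actL (X3 i) c) (x3 j)))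
  actL_distrib : ∀ (h : H) (a b : M) (n : ℕ) (d1 d2 : Fin n → H),
      Q.comul h = ∑ i, d1 i ⊗ₜ[k] d2 i →
      actL h (mul a b) = ∑ i, mul (actL (d1 i) a) (actL (d2 i) b)
  actR_distrib : ∀ (h : H) (a b : M) (n : ℕ) (d1 d2 : Fin n → H),
      Q.comul h = ∑ i, d1 i ⊗ₜ[k] d2 i →
      actR (mul a b) h = ∑ i, mul (actR a (d1 i)) (actR b (d2 i))
  actL_unit : ∀ h : H, actL h one = Q.counit h • one
  actR_unit : ∀ h : H, actR one h = Q.counit h • one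

end ModuleAlgebras

section ComoduleAlgebras

variable {k H : Type*} [Field k] [Ring H] [Algebra k H]

/-- A right comodule algebra over a quasi-bialgebra. -/
structure RightComoduleAlgebra (Q : QuasiBialgebra k H) (A : Type*)
    [Ring A] [Algebra k A] where
  coact : A →ₐ[k] A ⊗[k] H
  Phir : A ⊗[k] (H ⊗[k] (H))
  PhirInv : A ⊗[k] (H ⊗[k] (H))
  Phir_mul_inv : Phir * PhirInv = 1
  Phir_inv_mul : PhirInv * Phir = 1
  coassoc : ∀ (a : A) (n : ℕ) (a0 : Fin n → A) (a1 : Fin n → H),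
      coact a = ∑ i, a0 i ⊗ₜ[k] a1 i →
      ∀ (m : ℕ) (a00 : Fin n → Fin m → A) (a01 : Fin n → Fin m → H),
        (∀ i, coact (a0 i) = ∑ j, a00 i j ⊗ₜ[k] a01 i j) →
        Phir * (∑ i, ∑ j, a00 i j ⊗ₜ[k] (a01 i j ⊗ₜ[k] a1 i))
          = (∑ i, a0 i ⊗ₜ[k] Q.comul (a1 i)) * Phir
  pentagon : ∀ (n : ℕ) (R1 : Fin n → A) (R2 R3 : Fin n → H),
      Phir = ∑ i, R1 i ⊗ₜ[k] (R2 i ⊗ₜ[k] R3 i) →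
      ∀ (m : ℕ) (c1 c2 : Fin n → Fin m → H),
        (∀ i, Q.comul (R2 i) = ∑ j, c1 i j ⊗ₜ[k] c2 i j) →
      ∀ (p : ℕ) (w0 : Fin n → Fin p → A) (w1 : Fin n → Fin p → H),
        (∀ i, coact (R1 i) = ∑ j, w0 i j ⊗ₜ[k] w1 i j) →
        ((1 : A) ⊗ₜ[k] Q.Phi)
          * (∑ i, ∑ j, R1 i ⊗ₜ[k] (c1 i j ⊗ₜ[k] (c2 i j ⊗ₜ[k] R3 i)))
          * (∑ i, R1 i ⊗ₜ[k] (R2 i ⊗ₜ[k] (R3 i ⊗ₜ[k] (1 : H))))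
        = (∑ i, R1 i ⊗ₜ[k] (R2 i ⊗ₜ[k] Q.comul (R3 i)))
          * (∑ i, ∑ j, w0 i j ⊗ₜ[k] (w1 i j ⊗ₜ[k] (R2 i ⊗ₜ[k] R3 i)))
  counital : ∀ (a : A) (n : ℕ) (a0 : Fin n → A) (a1 : Fin n → H),
      coact a = ∑ i, a0 i ⊗ₜ[k] a1 i → (∑ i, Q.counit (a1 i) • a0 i) = a
  Phir_normal_mid : ∀ (n : ℕ) (R1 : Fin n → A) (R2 R3 : Fin n → H),
      Phir = ∑ i, R1 i ⊗ₜ[k] (R2 i ⊗ₜ[k] R3 i) →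
      (∑ i, Q.counit (R2 i) • (R1 i ⊗ₜ[k] R3 i)) = (1 : A ⊗[k] H)
  Phir_normal_right : ∀ (n : ℕ) (R1 : Fin n → A) (R2 R3 : Fin n → H),
      Phir = ∑ i, R1 i ⊗ₜ[k] (R2 i ⊗ₜ[k] R3 i) →
      (∑ i, Q.counit (R3 i) • (R1 i ⊗ₜ[k] R2 i)) = (1 : A ⊗[k] H)

/-- A left comodule algebra over a quasi-bialgebra. -/
structure LeftComoduleAlgebra (Q : QuasiBialgebra k H) (B : Type*)
    [Ring B] [Algebra k B] where
  coact : B →ₐ[k] H ⊗[k] B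
  Phil : H ⊗[k] (H ⊗[k] (B))
  PhilInv : H ⊗[k] (H ⊗[k] (B))
  Phil_mul_inv : Phil * PhilInv = 1
  Phil_inv_mul : PhilInv * Phil = 1
  coassoc : ∀ (b : B) (n : ℕ) (bm : Fin n → H) (b0 : Fin n → B),
      coact b = ∑ i, bm i ⊗ₜ[k] b0 i →
      ∀ (m : ℕ) (d1 d2 : Fin n → Fin m → H),
        (∀ i, Q.comul (bm i) = ∑ j, d1 i j ⊗ₜ[k] d2 i j) →
        (∑ i, bm i ⊗ₜ[k] coact (b0 i)) * Phil
          = Phil * (∑ i, ∑ j, d1 i j ⊗ₜ[k] (d2 i j ⊗ₜ[k] b0 i))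
  pentagon : ∀ (n : ℕ) (L1 L2 : Fin n → H) (L3 : Fin n → B),
      Phil = ∑ i, L1 i ⊗ₜ[k] (L2 i ⊗ₜ[k] L3 i) →
      ∀ (m : ℕ) (c1 c2 : Fin n → Fin m → H),
        (∀ i, Q.comul (L2 i) = ∑ j, c1 i j ⊗ₜ[k] c2 i j) →
      ∀ (p : ℕ) (d1 d2 : Fin n → Fin p → H),
        (∀ i, Q.comul (L1 i) = ∑ j, d1 i j ⊗ₜ[k] d2 i j) →
      ∀ (q : ℕ) (X1 X2 X3 : Fin q → H),
        Q.Phi = ∑ i, X1 i ⊗ₜ[k] (X2 i ⊗ₜ[k] X3 i) →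
        ((1 : H) ⊗ₜ[k] Phil)
          * (∑ i, ∑ j, L1 i ⊗ₜ[k] (c1 i j ⊗ₜ[k] (c2 i j ⊗ₜ[k] L3 i)))
          * (∑ a, X1 a ⊗ₜ[k] (X2 a ⊗ₜ[k] (X3 a ⊗ₜ[k] (1 : B))))
        = (∑ i, L1 i ⊗ₜ[k] (L2 i ⊗ₜ[k] coact (L3 i)))
          * (∑ i, ∑ j, d1 i j ⊗ₜ[k] (d2 i j ⊗ₜ[k] (L2 i ⊗ₜ[k] L3 i)))
  counital : ∀ (b : B) (n : ℕ) (bm : Fin n → H) (b0 : Fin n → B),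
      coact b = ∑ i, bm i ⊗ₜ[k] b0 i → (∑ i, Q.counit (bm i) • b0 i) = b
  Phil_normal_mid : ∀ (n : ℕ) (L1 L2 : Fin n → H) (L3 : Fin n → B),
      Phil = ∑ i, L1 i ⊗ₜ[k] (L2 i ⊗ₜ[k] L3 i) →
      (∑ i, Q.counit (L2 i) • (L1 i ⊗ₜ[k] L3 i)) = (1 : H ⊗[k] B)
  Phil_normal_left : ∀ (n : ℕ) (L1 L2 : Fin n → H) (L3 : Fin n → B),
      Phil = ∑ i, L1 i ⊗ₜ[k] (L2 i ⊗ₜ[k] L3 i) →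
      (∑ i, Q.counit (L1 i) • (L2 i ⊗ₜ[k] L3 i)) = (1 : H ⊗[k] B)

/-- An `H`-bicomodule algebra over a quasi-bialgebra. -/
structure BicomoduleAlgebra (Q : QuasiBialgebra k H) (A : Type*)
    [Ring A] [Algebra k A] where
  left : LeftComoduleAlgebra Q A
  right : RightComoduleAlgebra Q A
  Philr : H ⊗[k] (A ⊗[k] (H))
  PhilrInv : H ⊗[k] (A ⊗[k] (H))
  Philr_mul_inv : Philr * PhilrInv = 1
  Philr_inv_mul : PhilrInv * Philr = 1
  compat : ∀ (u : A) (n : ℕ) (u0 : Fin n → A) (u1 : Fin n → H),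
      right.coact u = ∑ i, u0 i ⊗ₜ[k] u1 i →
      ∀ (m : ℕ) (v1 : Fin n → Fin m → H) (v2 : Fin n → Fin m → A),
        (∀ i, left.coact (u0 i) = ∑ j, v1 i j ⊗ₜ[k] v2 i j) →
      ∀ (p : ℕ) (w1 : Fin p → H) (w0 : Fin p → A),
        left.coact u = ∑ j, w1 j ⊗ₜ[k] w0 j →
        Philr * (∑ i, ∑ j, v1 i j ⊗ₜ[k] (v2 i j ⊗ₜ[k] u1 i))
          = (∑ j, w1 j ⊗ₜ[k] right.coact (w0 j)) * Philr
  pentagonL : ∀ (n : ℕ) (T1 : Fin n → H) (T2 : Fin n → A) (T3 : Fin n → H),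
      Philr = ∑ i, T1 i ⊗ₜ[k] (T2 i ⊗ₜ[k] T3 i) →
      ∀ (m : ℕ) (M1 : Fin n → Fin m → H) (M2 : Fin n → Fin m → A),
        (∀ i, left.coact (T2 i) = ∑ j, M1 i j ⊗ₜ[k] M2 i j) →
      ∀ (p : ℕ) (d1 d2 : Fin n → Fin p → H),
        (∀ i, Q.comul (T1 i) = ∑ j, d1 i j ⊗ₜ[k] d2 i j) →
      ∀ (q : ℕ) (L1 L2 : Fin q → H) (L3 : Fin q → A),
        left.Phil = ∑ i, L1 i ⊗ₜ[k] (L2 i ⊗ₜ[k] L3 i) →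
        ((1 : H) ⊗ₜ[k] Philr)
          * (∑ i, ∑ j, T1 i ⊗ₜ[k] (M1 i j ⊗ₜ[k] (M2 i j ⊗ₜ[k] T3 i)))
          * (∑ a, L1 a ⊗ₜ[k] (L2 a ⊗ₜ[k] (L3 a ⊗ₜ[k] (1 : H))))
        = (∑ a, L1 a ⊗ₜ[k] (L2 a ⊗ₜ[k] right.coact (L3 a)))
          * (∑ i, ∑ j, d1 i j ⊗ₜ[k] (d2 i j ⊗ₜ[k] (T2 i ⊗ₜ[k] T3 i)))
  pentagonR : ∀ (n : ℕ) (T1 : Fin n → H) (T2 : Fin n → A) (T3 : Fin n → H),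
      Philr = ∑ i, T1 i ⊗ₜ[k] (T2 i ⊗ₜ[k] T3 i) →
      ∀ (m : ℕ) (P0 : Fin n → Fin m → A) (P1 : Fin n → Fin m → H),
        (∀ i, right.coact (T2 i) = ∑ j, P0 i j ⊗ₜ[k] P1 i j) →
      ∀ (q : ℕ) (R1 : Fin q → A) (R2 R3 : Fin q → H),
        right.Phir = ∑ i, R1 i ⊗ₜ[k] (R2 i ⊗ₜ[k] R3 i) →
      ∀ (r : ℕ) (v1 : Fin q → Fin r → H) (v2 : Fin q → Fin r → A),
        (∀ i, left.coact (R1 i) = ∑ j, v1 i j ⊗ₜ[k] v2 i j) →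
        ((1 : H) ⊗ₜ[k] right.Phir)
          * (∑ i, ∑ j, T1 i ⊗ₜ[k] (P0 i j ⊗ₜ[k] (P1 i j ⊗ₜ[k] T3 i)))
          * (∑ i, T1 i ⊗ₜ[k] (T2 i ⊗ₜ[k] (T3 i ⊗ₜ[k] (1 : H))))
        = (∑ i, T1 i ⊗ₜ[k] (T2 i ⊗ₜ[k] Q.comul (T3 i)))
          * (∑ a, ∑ j, v1 a j ⊗ₜ[k] (v2 a j ⊗ₜ[k] (R2 a ⊗ₜ[k] R3 a)))

end ComoduleAlgebras

section TwoSided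

variable {k H : Type*} [Field k] [Ring H] [Algebra k H]

/-- A two-sided coaction `(δ, Ψ)` of a quasi-bialgebra on a unital associative algebra. -/
structure TwoSidedCoaction (Q : QuasiBialgebra k H) (A : Type*)
    [Ring A] [Algebra k A] where
  coact : A →ₐ[k] H ⊗[k] (A ⊗[k] (H))
  Psi : H ⊗[k] (H ⊗[k] (A ⊗[k] (H ⊗[k] (H))))
  PsiInv : H ⊗[k] (H ⊗[k] (A ⊗[k] (H ⊗[k] (H))))
  Psi_mul_inv : Psi * PsiInv = 1
  Psi_inv_mul : PsiInv * Psi = 1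
  tc1 : ∀ (u : A) (n : ℕ) (p : Fin n → H) (q : Fin n → A) (r : Fin n → H),
      coact u = ∑ i, p i ⊗ₜ[k] (q i ⊗ₜ[k] r i) →
      ∀ (m : ℕ) (p' : Fin n → Fin m → H) (q' : Fin n → Fin m → A) (r' : Fin n → Fin m → H),
        (∀ i, coact (q i) = ∑ j, p' i j ⊗ₜ[k] (q' i j ⊗ₜ[k] r' i j)) →
      ∀ (mc : ℕ) (c1 c2 : Fin n → Fin mc → H),
        (∀ i, Q.comul (p i) = ∑ j, c1 i j ⊗ₜ[k] c2 i j) →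
      ∀ (md : ℕ) (e1 e2 : Fin n → Fin md → H),
        (∀ i, Q.comul (r i) = ∑ j, e1 i j ⊗ₜ[k] e2 i j) →
      (∑ i, ∑ j, p i ⊗ₜ[k] (p' i j ⊗ₜ[k] (q' i j ⊗ₜ[k] (r' i j ⊗ₜ[k] r i)))) * Psi
        = Psi * (∑ i, ∑ j, ∑ l, c1 i j ⊗ₜ[k] (c2 i j ⊗ₜ[k] (q i ⊗ₜ[k] (e1 i l ⊗ₜ[k] e2 i l))))
  tc2 : ∀ (n : ℕ) (P1 P2 : Fin n → H) (P3 : Fin n → A) (P4 P5 : Fin n → H),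
      Psi = ∑ i, P1 i ⊗ₜ[k] (P2 i ⊗ₜ[k] (P3 i ⊗ₜ[k] (P4 i ⊗ₜ[k] P5 i))) →
      ∀ (mc : ℕ) (c1 c2 : Fin n → Fin mc → H),
        (∀ i, Q.comul (P2 i) = ∑ j, c1 i j ⊗ₜ[k] c2 i j) →
      ∀ (md : ℕ) (e1 e2 : Fin n → Fin md → H),
        (∀ i, Q.comul (P4 i) = ∑ j, e1 i j ⊗ₜ[k] e2 i j) →
      ∀ (mq : ℕ) (dp : Fin n → Fin mq → H) (dq : Fin n → Fin mq → A) (dr : Fin n → Fin mq → H),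
        (∀ i, coact (P3 i) = ∑ j, dp i j ⊗ₜ[k] (dq i j ⊗ₜ[k] dr i j)) →
      ∀ (mu : ℕ) (u1 u2 : Fin n → Fin mu → H),
        (∀ i, Q.comul (P1 i) = ∑ j, u1 i j ⊗ₜ[k] u2 i j) →
      ∀ (mv : ℕ) (v1 v2 : Fin n → Fin mv → H),
        (∀ i, Q.comul (P5 i) = ∑ j, v1 i j ⊗ₜ[k] v2 i j) →
      ∀ (nX : ℕ) (X1 X2 X3 : Fin nX → H),
        Q.Phi = ∑ i, X1 i ⊗ₜ[k] (X2 i ⊗ₜ[k] X3 i) →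
      ∀ (nx : ℕ) (x1 x2 x3 : Fin nx → H),
        Q.PhiInv = ∑ i, x1 i ⊗ₜ[k] (x2 i ⊗ₜ[k] x3 i) →
      (∑ i, (1 : H) ⊗ₜ[k] (P1 i ⊗ₜ[k] (P2 i ⊗ₜ[k] (P3 i ⊗ₜ[k] (P4 i ⊗ₜ[k] (P5 i ⊗ₜ[k] (1 : H)))))))
        * (∑ i, ∑ j, ∑ l, P1 i ⊗ₜ[k] (c1 i j ⊗ₜ[k] (c2 i j ⊗ₜ[k] (P3 i ⊗ₜ[k] (e1 i l ⊗ₜ[k] (e2 i l ⊗ₜ[k] P5 i))))))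
        * (∑ a, ∑ b, X1 a ⊗ₜ[k] (X2 a ⊗ₜ[k] (X3 a ⊗ₜ[k] ((1 : A) ⊗ₜ[k] (x1 b ⊗ₜ[k] (x2 b ⊗ₜ[k] x3 b))))))
      = (∑ i, ∑ j, P1 i ⊗ₜ[k] (P2 i ⊗ₜ[k] (dp i j ⊗ₜ[k] (dq i j ⊗ₜ[k] (dr i j ⊗ₜ[k] (P4 i ⊗ₜ[k] P5 i))))))
        * (∑ i, ∑ j, ∑ l, u1 i j ⊗ₜ[k] (u2 i j ⊗ₜ[k] (P2 i ⊗ₜ[k] (P3 i ⊗ₜ[k] (P4 i ⊗ₜ[k] (v1 i l ⊗ₜ[k] v2 i l))))))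
  tc3 : ∀ (u : A) (n : ℕ) (p : Fin n → H) (q : Fin n → A) (r : Fin n → H),
      coact u = ∑ i, p i ⊗ₜ[k] (q i ⊗ₜ[k] r i) →
      (∑ i, (Q.counit (p i) * Q.counit (r i)) • q i) = u
  tc4a : ∀ (n : ℕ) (P1 P2 : Fin n → H) (P3 : Fin n → A) (P4 P5 : Fin n → H),
      Psi = ∑ i, P1 i ⊗ₜ[k] (P2 i ⊗ₜ[k] (P3 i ⊗ₜ[k] (P4 i ⊗ₜ[k] P5 i))) →
      (∑ i, (Q.counit (P2 i) * Q.counit (P4 i)) • (P1 i ⊗ₜ[k] (P3 i ⊗ₜ[k] P5 i)))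
        = (1 : H) ⊗ₜ[k] ((1 : A) ⊗ₜ[k] (1 : H))
  tc4b : ∀ (n : ℕ) (P1 P2 : Fin n → H) (P3 : Fin n → A) (P4 P5 : Fin n → H),
      Psi = ∑ i, P1 i ⊗ₜ[k] (P2 i ⊗ₜ[k] (P3 i ⊗ₜ[k] (P4 i ⊗ₜ[k] P5 i))) →
      (∑ i, (Q.counit (P1 i) * Q.counit (P5 i)) • (P2 i ⊗ₜ[k] (P3 i ⊗ₜ[k] P4 i)))
        = (1 : H) ⊗ₜ[k] ((1 : A) ⊗ₜ[k] (1 : H))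

end TwoSided

section DrinfeldTwist

variable {k H : Type*} [Field k] [Ring H] [Algebra k H]

/-- `f` is the Drinfeld twist `f = (S⊗S)(Δᶜᵒᵖ(x¹))·γ·Δ(x²βS(x³))` of the
quasi-Hopf algebra `Q`, where `γ = S(A²)αA³ ⊗ S(A¹)αA⁴` and
`A¹⊗A²⊗A³⊗A⁴ = (Φ⊗1)(Δ⊗id⊗id)(Φ⁻¹)`. -/
def IsDrinfeldTwist (Q : QuasiHopfAlgebra k H) (f : H ⊗[k] H) : Prop :=
  ∀ (nX : ℕ) (X1 X2 X3 : Fin nX → H),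
    Q.Phi = ∑ i, X1 i ⊗ₜ[k] (X2 i ⊗ₜ[k] X3 i) →
  ∀ (n : ℕ) (x1 x2 x3 : Fin n → H),
    Q.PhiInv = ∑ i, x1 i ⊗ₜ[k] (x2 i ⊗ₜ[k] x3 i) →
  ∀ (nd : ℕ) (d1 d2 : Fin n → Fin nd → H),
    (∀ i, Q.comul (x1 i) = ∑ l, d1 i l ⊗ₜ[k] d2 i l) →
  ∀ (ne' : ℕ) (e1 e2 : Fin n → Fin ne' → H),
    (∀ i, Q.comul (x2 i * Q.elB * Q.antipode (x3 i)) = ∑ l, e1 i l ⊗ₜ[k] e2 i l) →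
  ∀ (nA : ℕ) (A1 A2 A3 A4 : Fin nA → H),
    (∑ j, A1 j ⊗ₜ[k] (A2 j ⊗ₜ[k] (A3 j ⊗ₜ[k] A4 j)))
      = (∑ i, X1 i ⊗ₜ[k] (X2 i ⊗ₜ[k] (X3 i ⊗ₜ[k] (1 : H))))
        * (∑ i, ∑ l, d1 i l ⊗ₜ[k] (d2 i l ⊗ₜ[k] (x2 i ⊗ₜ[k] x3 i))) →
  f = ∑ i, ∑ l, ∑ j, ∑ l',
      (Q.antipode (d2 i l) * (Q.antipode (A2 j) * Q.elA * A3 j) * e1 i l')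
        ⊗ₜ[k]
      (Q.antipode (d1 i l) * (Q.antipode (A1 j) * Q.elA * A4 j) * e2 i l')

/-- `g` is the inverse `g = Δ(S(x¹)αx²)·δ₀·(S⊗S)(Δᶜᵒᵖ(x³))` of the Drinfeld
twist of `Q`, where `δ₀ = B¹βS(B⁴) ⊗ B²βS(B³)` and
`B¹⊗B²⊗B³⊗B⁴ = (Δ⊗id⊗id)(Φ)(Φ⁻¹⊗1)`. -/
def IsDrinfeldTwistInv (Q : QuasiHopfAlgebra k H) (g : H ⊗[k] H) : Prop :=
  ∀ (nX : ℕ) (X1 X2 X3 : Fin nX → H),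
    Q.Phi = ∑ i, X1 i ⊗ₜ[k] (X2 i ⊗ₜ[k] X3 i) →
  ∀ (n : ℕ) (x1 x2 x3 : Fin n → H),
    Q.PhiInv = ∑ i, x1 i ⊗ₜ[k] (x2 i ⊗ₜ[k] x3 i) →
  ∀ (nD : ℕ) (D1 D2 : Fin nX → Fin nD → H),
    (∀ i, Q.comul (X1 i) = ∑ l, D1 i l ⊗ₜ[k] D2 i l) →
  ∀ (nu : ℕ) (u1 u2 : Fin n → Fin nu → H),
    (∀ i, Q.comul (Q.antipode (x1 i) * Q.elA * x2 i) = ∑ l, u1 i l ⊗ₜ[k] u2 i l) →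
  ∀ (nv : ℕ) (v1 v2 : Fin n → Fin nv → H),
    (∀ i, Q.comul (x3 i) = ∑ l, v1 i l ⊗ₜ[k] v2 i l) →
  ∀ (nB : ℕ) (B1 B2 B3 B4 : Fin nB → H),
    (∑ j, B1 j ⊗ₜ[k] (B2 j ⊗ₜ[k] (B3 j ⊗ₜ[k] B4 j)))
      = (∑ i, ∑ l, D1 i l ⊗ₜ[k] (D2 i l ⊗ₜ[k] (X2 i ⊗ₜ[k] X3 i)))
        * (∑ i, x1 i ⊗ₜ[k] (x2 i ⊗ₜ[k] (x3 i ⊗ₜ[k] (1 : H)))) →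
  g = ∑ i, ∑ l, ∑ j, ∑ l',
      (u1 i l * (B1 j * Q.elB * Q.antipode (B4 j)) * Q.antipode (v2 i l'))
        ⊗ₜ[k]
      (u2 i l * (B2 j * Q.elB * Q.antipode (B3 j)) * Q.antipode (v1 i l'))

end DrinfeldTwist

section OmegaElements

variable {k H : Type*} [Field k] [Ring H] [Algebra k H]
variable {A : Type*} [Ring A] [Algebra k A]

/-- `Ω` is the element `Ω_δ = Ψ̄¹⊗Ψ̄²⊗Ψ̄³⊗S⁻¹(f¹Ψ̄⁴)⊗S⁻¹(f²Ψ̄⁵)` attached to a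
two-sided coaction `(δ,Ψ)`, where `f` is the Drinfeld twist. -/
def IsOmegaTS (Q : QuasiHopfAlgebra k H) (D : TwoSidedCoaction Q.toQuasiBialgebra A)
    (f : H ⊗[k] H) (Om : H ⊗[k] (H ⊗[k] (A ⊗[k] (H ⊗[k] (H))))) : Prop :=
  ∀ (n : ℕ) (B1 B2 : Fin n → H) (B3 : Fin n → A) (B4 B5 : Fin n → H),
    D.PsiInv = ∑ i, B1 i ⊗ₜ[k] (B2 i ⊗ₜ[k] (B3 i ⊗ₜ[k] (B4 i ⊗ₜ[k] B5 i))) →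
  ∀ (m : ℕ) (f1 f2 : Fin m → H), f = ∑ s, f1 s ⊗ₜ[k] f2 s →
  Om = ∑ i, ∑ s, B1 i ⊗ₜ[k] (B2 i ⊗ₜ[k] (B3 i ⊗ₜ[k]
        (Q.antipodeInv (f1 s * B4 i) ⊗ₜ[k] Q.antipodeInv (f2 s * B5 i))))

/-- `Ω'` is the element `Ω'_δ = S⁻¹(Ψ¹g¹)⊗S⁻¹(Ψ²g²)⊗Ψ³⊗Ψ⁴⊗Ψ⁵` attached to a
two-sided coaction `(δ,Ψ)`, where `g` is the inverse Drinfeld twist. -/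
def IsOmegaTS' (Q : QuasiHopfAlgebra k H) (D : TwoSidedCoaction Q.toQuasiBialgebra A)
    (g : H ⊗[k] H) (Om : H ⊗[k] (H ⊗[k] (A ⊗[k] (H ⊗[k] (H))))) : Prop :=
  ∀ (n : ℕ) (P1 P2 : Fin n → H) (P3 : Fin n → A) (P4 P5 : Fin n → H),
    D.Psi = ∑ i, P1 i ⊗ₜ[k] (P2 i ⊗ₜ[k] (P3 i ⊗ₜ[k] (P4 i ⊗ₜ[k] P5 i))) →
  ∀ (m : ℕ) (g1 g2 : Fin m → H), g = ∑ s, g1 s ⊗ₜ[k] g2 s →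
  Om = ∑ i, ∑ s, Q.antipodeInv (P1 i * g1 s) ⊗ₜ[k] (Q.antipodeInv (P2 i * g2 s) ⊗ₜ[k]
        (P3 i ⊗ₜ[k] (P4 i ⊗ₜ[k] P5 i)))

/-- `Ω` is the canonical element
`Ω = (X̃¹ρ)[−1]₁x̃¹λθ¹ ⊗ (X̃¹ρ)[−1]₂x̃²λ(θ²)[−1] ⊗ (X̃¹ρ)[0]x̃³λ(θ²)[0]
      ⊗ S⁻¹(f¹X̃²ρθ³) ⊗ S⁻¹(f²X̃³ρ)`
attached to an `H`-bicomodule algebra. -/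
def IsOmegaL (Q : QuasiHopfAlgebra k H) (B : BicomoduleAlgebra Q.toQuasiBialgebra A)
    (f : H ⊗[k] H) (Om : H ⊗[k] (H ⊗[k] (A ⊗[k] (H ⊗[k] (H))))) : Prop :=
  ∀ (n : ℕ) (R1 : Fin n → A) (R2 R3 : Fin n → H),
    B.right.Phir = ∑ i, R1 i ⊗ₜ[k] (R2 i ⊗ₜ[k] R3 i) →
  ∀ (nJ : ℕ) (L1 : Fin n → Fin nJ → H) (L2 : Fin n → Fin nJ → A),
    (∀ i, B.left.coact (R1 i) = ∑ j, L1 i j ⊗ₜ[k] L2 i j) →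
  ∀ (nL : ℕ) (D1 D2 : Fin n → Fin nJ → Fin nL → H),
    (∀ i j, Q.comul (L1 i j) = ∑ l, D1 i j l ⊗ₜ[k] D2 i j l) →
  ∀ (nM : ℕ) (y1 y2 : Fin nM → H) (y3 : Fin nM → A),
    B.left.PhilInv = ∑ i, y1 i ⊗ₜ[k] (y2 i ⊗ₜ[k] y3 i) →
  ∀ (nQ : ℕ) (t1 : Fin nQ → H) (t2 : Fin nQ → A) (t3 : Fin nQ → H),
    B.PhilrInv = ∑ i, t1 i ⊗ₜ[k] (t2 i ⊗ₜ[k] t3 i) →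
  ∀ (nR : ℕ) (M1 : Fin nQ → Fin nR → H) (M2 : Fin nQ → Fin nR → A),
    (∀ q, B.left.coact (t2 q) = ∑ r, M1 q r ⊗ₜ[k] M2 q r) →
  ∀ (nS : ℕ) (f1 f2 : Fin nS → H), f = ∑ s, f1 s ⊗ₜ[k] f2 s →
  Om = ∑ i, ∑ j, ∑ l, ∑ m, ∑ q, ∑ r, ∑ s,
      (D1 i j l * y1 m * t1 q) ⊗ₜ[k] ((D2 i j l * y2 m * M1 q r) ⊗ₜ[k]
        ((L2 i j * y3 m * M2 q r) ⊗ₜ[k]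
          (Q.antipodeInv (f1 s * R2 i * t3 q) ⊗ₜ[k] Q.antipodeInv (f2 s * R3 i))))

/-- `ω` is the canonical element
`ω = x̃¹λ ⊗ x̃²λΘ¹ ⊗ (x̃³λ)⟨0⟩X̃¹ρ(Θ²)⟨0⟩ ⊗ S⁻¹(f¹((x̃³λ)⟨1⟩)₁X̃²ρ(Θ²)⟨1⟩)
      ⊗ S⁻¹(f²((x̃³λ)⟨1⟩)₂X̃³ρΘ³)`
attached to an `H`-bicomodule algebra. -/
def IsOmegaR (Q : QuasiHopfAlgebra k H) (B : BicomoduleAlgebra Q.toQuasiBialgebra A)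
    (f : H ⊗[k] H) (Om : H ⊗[k] (H ⊗[k] (A ⊗[k] (H ⊗[k] (H))))) : Prop :=
  ∀ (nM : ℕ) (y1 y2 : Fin nM → H) (y3 : Fin nM → A),
    B.left.PhilInv = ∑ i, y1 i ⊗ₜ[k] (y2 i ⊗ₜ[k] y3 i) →
  ∀ (nJ : ℕ) (a0 : Fin nM → Fin nJ → A) (b1 : Fin nM → Fin nJ → H),
    (∀ m, B.right.coact (y3 m) = ∑ j, a0 m j ⊗ₜ[k] b1 m j) →
  ∀ (nL : ℕ) (c1 d1 : Fin nM → Fin nJ → Fin nL → H),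
    (∀ m j, Q.comul (b1 m j) = ∑ l, c1 m j l ⊗ₜ[k] d1 m j l) →
  ∀ (n : ℕ) (R1 : Fin n → A) (R2 R3 : Fin n → H),
    B.right.Phir = ∑ i, R1 i ⊗ₜ[k] (R2 i ⊗ₜ[k] R3 i) →
  ∀ (nQ : ℕ) (T1 : Fin nQ → H) (T2 : Fin nQ → A) (T3 : Fin nQ → H),
    B.Philr = ∑ i, T1 i ⊗ₜ[k] (T2 i ⊗ₜ[k] T3 i) →
  ∀ (nR : ℕ) (P0 : Fin nQ → Fin nR → A) (P1 : Fin nQ → Fin nR → H),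
    (∀ q, B.right.coact (T2 q) = ∑ r, P0 q r ⊗ₜ[k] P1 q r) →
  ∀ (nS : ℕ) (f1 f2 : Fin nS → H), f = ∑ s, f1 s ⊗ₜ[k] f2 s →
  Om = ∑ m, ∑ j, ∑ l, ∑ i, ∑ q, ∑ r, ∑ s,
      (y1 m) ⊗ₜ[k] ((y2 m * T1 q) ⊗ₜ[k]
        ((a0 m j * R1 i * P0 q r) ⊗ₜ[k]
          (Q.antipodeInv (f1 s * c1 m j l * R2 i * P1 q r) ⊗ₜ[k]
           Q.antipodeInv (f2 s * d1 m j l * R3 i * T3 q))))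

end OmegaElements

section MultiplicationPredicates

variable {k H : Type*} [Field k] [Ring H] [Algebra k H]

/-- The multiplication of the left generalized diagonal crossed product
`𝒜 ⋈_δ 𝔸` for a two-sided coaction, with respect to the element `Ω`. -/
def IsGDCmulTS (Q : QuasiHopfAlgebra k H) {A M : Type*} [Ring A] [Algebra k A]
    [AddCommGroup M] [Module k M]
    (D : TwoSidedCoaction Q.toQuasiBialgebra A)
    (MA : BimoduleAlgebra Q.toQuasiBialgebra M)
    (Om : H ⊗[k] (H ⊗[k] (A ⊗[k] (H ⊗[k] (H)))))
    (mul : M ⊗[k] A →ₗ[k] M ⊗[k] A →ₗ[k] M ⊗[k] A) : Prop :=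
  ∀ (φ φ' : M) (u u' : A),
  ∀ (n : ℕ) (O1 O2 : Fin n → H) (O3 : Fin n → A) (O4 O5 : Fin n → H),
    Om = ∑ i, O1 i ⊗ₜ[k] (O2 i ⊗ₜ[k] (O3 i ⊗ₜ[k] (O4 i ⊗ₜ[k] O5 i))) →
  ∀ (m : ℕ) (p : Fin m → H) (q : Fin m → A) (r : Fin m → H),
    D.coact u = ∑ j, p j ⊗ₜ[k] (q j ⊗ₜ[k] r j) →
  mul (φ ⊗ₜ[k] u) (φ' ⊗ₜ[k] u')
    = ∑ i, ∑ j, (MA.mul (MA.actR (MA.actL (O1 i) φ) (O5 i))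
        (MA.actR (MA.actL (O2 i * p j) φ') (Q.antipodeInv (r j) * O4 i)))
      ⊗ₜ[k] (O3 i * q j * u')

/-- The multiplication of the right generalized diagonal crossed product
`𝔸 ⋈_δ 𝒜` for a two-sided coaction, with respect to the element `Ω'`. -/
def IsGDCmulTS' (Q : QuasiHopfAlgebra k H) {A M : Type*} [Ring A] [Algebra k A]
    [AddCommGroup M] [Module k M]
    (D : TwoSidedCoaction Q.toQuasiBialgebra A)
    (MA : BimoduleAlgebra Q.toQuasiBialgebra M)
    (Om : H ⊗[k] (H ⊗[k] (A ⊗[k] (H ⊗[k] (H)))))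
    (mul : A ⊗[k] M →ₗ[k] A ⊗[k] M →ₗ[k] A ⊗[k] M) : Prop :=
  ∀ (u u' : A) (φ φ' : M),
  ∀ (n : ℕ) (O1 O2 : Fin n → H) (O3 : Fin n → A) (O4 O5 : Fin n → H),
    Om = ∑ i, O1 i ⊗ₜ[k] (O2 i ⊗ₜ[k] (O3 i ⊗ₜ[k] (O4 i ⊗ₜ[k] O5 i))) →
  ∀ (m : ℕ) (p : Fin m → H) (q : Fin m → A) (r : Fin m → H),
    D.coact u' = ∑ j, p j ⊗ₜ[k] (q j ⊗ₜ[k] r j) →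
  mul (u ⊗ₜ[k] φ) (u' ⊗ₜ[k] φ')
    = ∑ i, ∑ j, (u * q j * O3 i) ⊗ₜ[k]
        (MA.mul (MA.actR (MA.actL (O2 i * Q.antipodeInv (p j)) φ) (r j * O4 i))
          (MA.actR (MA.actL (O1 i) φ') (O5 i)))

/-- The multiplication of the generalized diagonal crossed product `𝒜 ⋈ 𝔸`
(built from `δ_l`) over an `H`-bicomodule algebra `𝔸`. -/
def IsGDCmulL (Q : QuasiHopfAlgebra k H) {A M : Type*} [Ring A] [Algebra k A]
    [AddCommGroup M] [Module k M]
    (B : BicomoduleAlgebra Q.toQuasiBialgebra A)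
    (MA : BimoduleAlgebra Q.toQuasiBialgebra M)
    (Om : H ⊗[k] (H ⊗[k] (A ⊗[k] (H ⊗[k] (H)))))
    (mul : M ⊗[k] A →ₗ[k] M ⊗[k] A →ₗ[k] M ⊗[k] A) : Prop :=
  ∀ (φ φ' : M) (u u' : A),
  ∀ (n : ℕ) (O1 O2 : Fin n → H) (O3 : Fin n → A) (O4 O5 : Fin n → H),
    Om = ∑ i, O1 i ⊗ₜ[k] (O2 i ⊗ₜ[k] (O3 i ⊗ₜ[k] (O4 i ⊗ₜ[k] O5 i))) →
  ∀ (m : ℕ) (u0 : Fin m → A) (u1 : Fin m → H),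
    B.right.coact u = ∑ j, u0 j ⊗ₜ[k] u1 j →
  ∀ (p : ℕ) (v1 : Fin m → Fin p → H) (v2 : Fin m → Fin p → A),
    (∀ j, B.left.coact (u0 j) = ∑ l, v1 j l ⊗ₜ[k] v2 j l) →
  mul (φ ⊗ₜ[k] u) (φ' ⊗ₜ[k] u')
    = ∑ i, ∑ j, ∑ l, (MA.mul (MA.actR (MA.actL (O1 i) φ) (O5 i))
        (MA.actR (MA.actL (O2 i * v1 j l) φ') (Q.antipodeInv (u1 j) * O4 i)))
      ⊗ₜ[k] (O3 i * v2 j l * u')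

/-- The multiplication of the generalized diagonal crossed product `𝒜 ⧓ 𝔸`
(built from `δ_r`) over an `H`-bicomodule algebra `𝔸`. -/
def IsGDCmulR (Q : QuasiHopfAlgebra k H) {A M : Type*} [Ring A] [Algebra k A]
    [AddCommGroup M] [Module k M]
    (B : BicomoduleAlgebra Q.toQuasiBialgebra A)
    (MA : BimoduleAlgebra Q.toQuasiBialgebra M)
    (Om : H ⊗[k] (H ⊗[k] (A ⊗[k] (H ⊗[k] (H)))))
    (mul : M ⊗[k] A →ₗ[k] M ⊗[k] A →ₗ[k] M ⊗[k] A) : Prop :=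
  ∀ (φ φ' : M) (u u' : A),
  ∀ (n : ℕ) (O1 O2 : Fin n → H) (O3 : Fin n → A) (O4 O5 : Fin n → H),
    Om = ∑ i, O1 i ⊗ₜ[k] (O2 i ⊗ₜ[k] (O3 i ⊗ₜ[k] (O4 i ⊗ₜ[k] O5 i))) →
  ∀ (m : ℕ) (um : Fin m → H) (u0 : Fin m → A),
    B.left.coact u = ∑ j, um j ⊗ₜ[k] u0 j →
  ∀ (p : ℕ) (w0 : Fin m → Fin p → A) (w1 : Fin m → Fin p → H),
    (∀ j, B.right.coact (u0 j) = ∑ l, w0 j l ⊗ₜ[k] w1 j l) →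
  mul (φ ⊗ₜ[k] u) (φ' ⊗ₜ[k] u')
    = ∑ i, ∑ j, ∑ l, (MA.mul (MA.actR (MA.actL (O1 i) φ) (O5 i))
        (MA.actR (MA.actL (O2 i * um j) φ') (Q.antipodeInv (w1 j l) * O4 i)))
      ⊗ₜ[k] (O3 i * w0 j l * u')

/-- The multiplication of the generalized smash product `A ▸< 𝔅` of a left
module algebra and a left comodule algebra over a quasi-bialgebra. -/
def IsGSMmul (Q : QuasiBialgebra k H) {A B : Type*} [AddCommGroup A] [Module k A]
    [Ring B] [Algebra k B]
    (MA : LeftModuleAlgebra Q A) (CB : LeftComoduleAlgebra Q B)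
    (mul : A ⊗[k] B →ₗ[k] A ⊗[k] B →ₗ[k] A ⊗[k] B) : Prop :=
  ∀ (a a' : A) (b b' : B),
  ∀ (n : ℕ) (y1 y2 : Fin n → H) (y3 : Fin n → B),
    CB.PhilInv = ∑ i, y1 i ⊗ₜ[k] (y2 i ⊗ₜ[k] y3 i) →
  ∀ (m : ℕ) (bm : Fin m → H) (b0 : Fin m → B),
    CB.coact b = ∑ j, bm j ⊗ₜ[k] b0 j →
  mul (a ⊗ₜ[k] b) (a' ⊗ₜ[k] b')
    = ∑ i, ∑ j, (MA.mul (MA.act (y1 i) a) (MA.act (y2 i * bm j) a'))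
        ⊗ₜ[k] (y3 i * b0 j * b')

/-- The multiplication of the generalized smash product `𝔄 ▸◁ B` of a right
comodule algebra and a right module algebra over a quasi-bialgebra. -/
def IsRGSMmul (Q : QuasiBialgebra k H) {A B : Type*} [Ring A] [Algebra k A]
    [AddCommGroup B] [Module k B]
    (CA : RightComoduleAlgebra Q A) (MB : RightModuleAlgebra Q B)
    (mul : A ⊗[k] B →ₗ[k] A ⊗[k] B →ₗ[k] A ⊗[k] B) : Prop :=
  ∀ (a a' : A) (b b' : B),
  ∀ (n : ℕ) (x1 : Fin n → A) (x2 x3 : Fin n → H),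
    CA.PhirInv = ∑ i, x1 i ⊗ₜ[k] (x2 i ⊗ₜ[k] x3 i) →
  ∀ (m : ℕ) (a0 : Fin m → A) (a1 : Fin m → H),
    CA.coact a' = ∑ j, a0 j ⊗ₜ[k] a1 j →
  mul (a ⊗ₜ[k] b) (a' ⊗ₜ[k] b')
    = ∑ i, ∑ j, (a * a0 j * x1 i) ⊗ₜ[k]
        (MB.mul (MB.act b (a1 j * x2 i)) (MB.act b' (x3 i)))

/-- The multiplication of the two-sided generalized smash product
`A ▸< 𝔸 ▸◁ B`. -/
def IsTGSMmul (Q : QuasiBialgebra k H) {A AA B : Type*}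
    [AddCommGroup A] [Module k A] [Ring AA] [Algebra k AA]
    [AddCommGroup B] [Module k B]
    (MA : LeftModuleAlgebra Q A) (BC : BicomoduleAlgebra Q AA)
    (MB : RightModuleAlgebra Q B)
    (mul : A ⊗[k] (AA ⊗[k] (B)) →ₗ[k] A ⊗[k] (AA ⊗[k] (B)) →ₗ[k] A ⊗[k] (AA ⊗[k] (B))) : Prop :=
  ∀ (a a' : A) (u u' : AA) (b b' : B),
  ∀ (n : ℕ) (y1 y2 : Fin n → H) (y3 : Fin n → AA),
    BC.left.PhilInv = ∑ i, y1 i ⊗ₜ[k] (y2 i ⊗ₜ[k] y3 i) →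
  ∀ (m : ℕ) (x1 : Fin m → AA) (x2 x3 : Fin m → H),
    BC.right.PhirInv = ∑ i, x1 i ⊗ₜ[k] (x2 i ⊗ₜ[k] x3 i) →
  ∀ (p : ℕ) (t1 : Fin p → H) (t2 : Fin p → AA) (t3 : Fin p → H),
    BC.PhilrInv = ∑ i, t1 i ⊗ₜ[k] (t2 i ⊗ₜ[k] t3 i) →
  ∀ (q : ℕ) (um : Fin q → H) (u0 : Fin q → AA),
    BC.left.coact u = ∑ j, um j ⊗ₜ[k] u0 j →
  ∀ (r : ℕ) (w0 : Fin r → AA) (w1 : Fin r → H),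
    BC.right.coact u' = ∑ j, w0 j ⊗ₜ[k] w1 j →
  mul (a ⊗ₜ[k] (u ⊗ₜ[k] b)) (a' ⊗ₜ[k] (u' ⊗ₜ[k] b'))
    = ∑ i, ∑ j, ∑ c, ∑ d, ∑ e,
      (MA.mul (MA.act (y1 i) a) (MA.act (y2 i * um j * t1 c) a'))
        ⊗ₜ[k] (((y3 i * u0 j * t2 c * w0 d * x1 e) : AA)
        ⊗ₜ[k] (MB.mul (MB.act b (t3 c * w1 d * x2 e)) (MB.act b' (x3 e))))

/-- The multiplication of the generalized two-sided crossed product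
`𝔄 >◁ 𝒜 ▷< 𝔅`. -/
def IsTSCPmul (Q : QuasiBialgebra k H) {AA M BB : Type*}
    [Ring AA] [Algebra k AA] [AddCommGroup M] [Module k M] [Ring BB] [Algebra k BB]
    (CA : RightComoduleAlgebra Q AA) (MA : BimoduleAlgebra Q M)
    (CB : LeftComoduleAlgebra Q BB)
    (mul : AA ⊗[k] (M ⊗[k] (BB)) →ₗ[k] AA ⊗[k] (M ⊗[k] (BB)) →ₗ[k] AA ⊗[k] (M ⊗[k] (BB))) : Prop :=
  ∀ (a a' : AA) (φ φ' : M) (b b' : BB),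
  ∀ (n : ℕ) (x1 : Fin n → AA) (x2 x3 : Fin n → H),
    CA.PhirInv = ∑ i, x1 i ⊗ₜ[k] (x2 i ⊗ₜ[k] x3 i) →
  ∀ (m : ℕ) (y1 y2 : Fin m → H) (y3 : Fin m → BB),
    CB.PhilInv = ∑ i, y1 i ⊗ₜ[k] (y2 i ⊗ₜ[k] y3 i) →
  ∀ (p : ℕ) (a0 : Fin p → AA) (a1 : Fin p → H),
    CA.coact a' = ∑ j, a0 j ⊗ₜ[k] a1 j →
  ∀ (q : ℕ) (bm : Fin q → H) (b0 : Fin q → BB),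
    CB.coact b = ∑ j, bm j ⊗ₜ[k] b0 j →
  mul (a ⊗ₜ[k] (φ ⊗ₜ[k] b)) (a' ⊗ₜ[k] (φ' ⊗ₜ[k] b'))
    = ∑ i, ∑ c, ∑ j, ∑ d,
      (a * a0 j * x1 i) ⊗ₜ[k]
        ((MA.mul (MA.actR (MA.actL (y1 c) φ) (a1 j * x2 i))
          (MA.actR (MA.actL (y2 c * bm d) φ') (x3 i)))
        ⊗ₜ[k] (y3 c * b0 d * b'))

end MultiplicationPredicates

section HHop

variable {k H : Type*} [Field k] [Ring H] [Algebra k H]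

/-- `K` is the quasi-bialgebra `H ⊗ H^op`, with componentwise structure and
reassociator `(X¹⊗x¹)⊗(X²⊗x²)⊗(X³⊗x³)`. -/
def IsHHopQB (Q : QuasiBialgebra k H) (K : QuasiBialgebra k (H ⊗[k] Hᵐᵒᵖ)) : Prop :=
  (∀ (h h' : H) (n : ℕ) (a b : Fin n → H) (m : ℕ) (c d : Fin m → H),
    Q.comul h = ∑ i, a i ⊗ₜ[k] b i → Q.comul h' = ∑ j, c j ⊗ₜ[k] d j →
    K.comul (h ⊗ₜ[k] MulOpposite.op h')
      = ∑ i, ∑ j, (a i ⊗ₜ[k] MulOpposite.op (c j)) ⊗ₜ[k] (b i ⊗ₜ[k] MulOpposite.op (d j)))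
  ∧ (∀ h h' : H, K.counit (h ⊗ₜ[k] MulOpposite.op h') = Q.counit h * Q.counit h')
  ∧ (∀ (n : ℕ) (X1 X2 X3 : Fin n → H), Q.Phi = ∑ i, X1 i ⊗ₜ[k] (X2 i ⊗ₜ[k] X3 i) →
     ∀ (m : ℕ) (x1 x2 x3 : Fin m → H), Q.PhiInv = ∑ i, x1 i ⊗ₜ[k] (x2 i ⊗ₜ[k] x3 i) →
     K.Phi = ∑ i, ∑ j, (X1 i ⊗ₜ[k] MulOpposite.op (x1 j)) ⊗ₜ[k]
        ((X2 i ⊗ₜ[k] MulOpposite.op (x2 j)) ⊗ₜ[k] (X3 i ⊗ₜ[k] MulOpposite.op (x3 j))))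
  ∧ (∀ (n : ℕ) (X1 X2 X3 : Fin n → H), Q.Phi = ∑ i, X1 i ⊗ₜ[k] (X2 i ⊗ₜ[k] X3 i) →
     ∀ (m : ℕ) (x1 x2 x3 : Fin m → H), Q.PhiInv = ∑ i, x1 i ⊗ₜ[k] (x2 i ⊗ₜ[k] x3 i) →
     K.PhiInv = ∑ i, ∑ j, (x1 i ⊗ₜ[k] MulOpposite.op (X1 j)) ⊗ₜ[k]
        ((x2 i ⊗ₜ[k] MulOpposite.op (X2 j)) ⊗ₜ[k] (x3 i ⊗ₜ[k] MulOpposite.op (X3 j))))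

end HHop



section RepHelpers
variable {k : Type*} [Field k] {P Q R S T : Type*} [AddCommGroup P] [Module k P]
  [AddCommGroup Q] [Module k Q] [AddCommGroup R] [Module k R]
  [AddCommGroup S] [Module k S] [AddCommGroup T] [Module k T]

lemma rep2 (t : P ⊗[k] Q) : ∃ (n : ℕ) (a : Fin n → P) (b : Fin n → Q),
    t = ∑ i, a i ⊗ₜ[k] b i := by
  induction t with
  | zero => exact ⟨0, finZeroElim, finZeroElim, by simp⟩
  | tmul p q => exact ⟨1, fun _ => p, fun _ => q, by simp⟩
  | add x y hx hy =>
    obtain ⟨n, a, b, rfl⟩ := hx; obtain ⟨m, c, d, rfl⟩ := hy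
    exact ⟨n + m, Fin.append a c, Fin.append b d, by
      rw [Fin.sum_univ_add]; simp⟩

lemma pad2 {n m : ℕ} (h : n ≤ m) (a : Fin n → P) (b : Fin n → Q) :
    ∃ (a' : Fin m → P) (b' : Fin m → Q),
      ∑ i, a i ⊗ₜ[k] b i = ∑ i, a' i ⊗ₜ[k] b' i := by
  set f : ℕ → P ⊗[k] Q := fun j =>
    (if h' : j < n then a ⟨j, h'⟩ else 0) ⊗ₜ[k] (if h' : j < n then b ⟨j, h'⟩ else 0) with hf
  refine ⟨fun j => if h' : (j : ℕ) < n then a ⟨j, h'⟩ else 0,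
    fun j => if h' : (j : ℕ) < n then b ⟨j, h'⟩ else 0, ?_⟩
  calc ∑ i : Fin n, a i ⊗ₜ[k] b i
      = ∑ i : Fin n, f i := Finset.sum_congr rfl fun i _ => by
        simp [hf, i.isLt]
    _ = ∑ i ∈ Finset.range n, f i := by rw [Fin.sum_univ_eq_sum_range f n]
    _ = ∑ i ∈ Finset.range m, f i := by
        apply Finset.sum_subset (Finset.range_subset_range.2 h)
        intro j _ hj
        rw [Finset.mem_range] at hj
        rw [hf]; simp only [dif_neg hj]
        exact TensorProduct.zero_tmul _ _
    _ = ∑ i : Fin m, f i := (Fin.sum_univ_eq_sum_range f m).symm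

lemma rep_fam {ι : Type*} [Fintype ι] (t : ι → P ⊗[k] Q) :
    ∃ (m : ℕ) (a : ι → Fin m → P) (b : ι → Fin m → Q),
      ∀ i, t i = ∑ j, a i j ⊗ₜ[k] b i j := by
  have h : ∀ i, ∃ (n : ℕ) (a : Fin n → P) (b : Fin n → Q), t i = ∑ j, a j ⊗ₜ[k] b j :=
    fun i => rep2 (t i)
  choose n a b hab using h
  set m := Finset.univ.sup n with hm
  have hle : ∀ i, n i ≤ m := fun i => Finset.le_sup (Finset.mem_univ i)
  have h2 : ∀ i, ∃ (a' : Fin m → P) (b' : Fin m → Q),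
      ∑ j, a i j ⊗ₜ[k] b i j = ∑ j, a' j ⊗ₜ[k] b' j := fun i => pad2 (hle i) (a i) (b i)
  choose a' b' hab' using h2
  exact ⟨m, a', b', fun i => (hab i).trans (hab' i)⟩

/-- flatten a double sum index -/
lemma flatten {n m : ℕ} {M : Type*} [AddCommMonoid M] (g : Fin n → Fin m → M) :
    ∑ i, ∑ j, g i j = ∑ q : Fin (n * m), g (finProdFinEquiv.symm q).1 (finProdFinEquiv.symm q).2 := by
  have h1 : ∑ i, ∑ j, g i j = ∑ p : Fin n × Fin m, g p.1 p.2 := by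
    exact (Fintype.sum_prod_type (f := fun p => g p.1 p.2)).symm
  rw [h1]
  exact (Equiv.sum_comp finProdFinEquiv.symm fun p => g p.1 p.2).symm

lemma rep_fam3 {ι : Type*} [Fintype ι] (t : ι → P ⊗[k] (Q ⊗[k] R)) :
    ∃ (m : ℕ) (a : ι → Fin m → P) (b : ι → Fin m → Q) (c : ι → Fin m → R),
      ∀ i, t i = ∑ j, a i j ⊗ₜ[k] (b i j ⊗ₜ[k] c i j) := by
  obtain ⟨m1, a, r, h⟩ := rep_fam (k := k) t
  obtain ⟨m2, b, c, h2⟩ := rep_fam (k := k) (fun p : ι × Fin m1 => r p.1 p.2)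
  refine ⟨m1 * m2,
    fun i q => a i (finProdFinEquiv.symm q).1,
    fun i q => b (i, (finProdFinEquiv.symm q).1) (finProdFinEquiv.symm q).2,
    fun i q => c (i, (finProdFinEquiv.symm q).1) (finProdFinEquiv.symm q).2,
    fun i => ?_⟩
  rw [h i]
  calc ∑ j, a i j ⊗ₜ[k] r i j
      = ∑ j, ∑ l, a i j ⊗ₜ[k] (b (i, j) l ⊗ₜ[k] c (i, j) l) := by
        refine Finset.sum_congr rfl fun j _ => ?_
        rw [h2 (i, j), TensorProduct.tmul_sum]
    _ = _ := flatten _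

lemma rep_fam4 {ι : Type*} [Fintype ι] (t : ι → P ⊗[k] (Q ⊗[k] (R ⊗[k] S))) :
    ∃ (m : ℕ) (a : ι → Fin m → P) (b : ι → Fin m → Q) (c : ι → Fin m → R)
      (d : ι → Fin m → S),
      ∀ i, t i = ∑ j, a i j ⊗ₜ[k] (b i j ⊗ₜ[k] (c i j ⊗ₜ[k] d i j)) := by
  obtain ⟨m1, a, r, h⟩ := rep_fam (k := k) t
  obtain ⟨m2, b, c, d, h2⟩ := rep_fam3 (k := k) (fun p : ι × Fin m1 => r p.1 p.2)
  refine ⟨m1 * m2,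
    fun i q => a i (finProdFinEquiv.symm q).1,
    fun i q => b (i, (finProdFinEquiv.symm q).1) (finProdFinEquiv.symm q).2,
    fun i q => c (i, (finProdFinEquiv.symm q).1) (finProdFinEquiv.symm q).2,
    fun i q => d (i, (finProdFinEquiv.symm q).1) (finProdFinEquiv.symm q).2,
    fun i => ?_⟩
  rw [h i]
  calc ∑ j, a i j ⊗ₜ[k] r i j
      = ∑ j, ∑ l, a i j ⊗ₜ[k] (b (i, j) l ⊗ₜ[k] (c (i, j) l ⊗ₜ[k] d (i, j) l)) := by
        refine Finset.sum_congr rfl fun j _ => ?_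
        rw [h2 (i, j), TensorProduct.tmul_sum]
    _ = _ := flatten _

lemma rep5 (t : P ⊗[k] (Q ⊗[k] (R ⊗[k] (S ⊗[k] T)))) :
    ∃ (m : ℕ) (a : Fin m → P) (b : Fin m → Q) (c : Fin m → R) (d : Fin m → S)
      (e : Fin m → T),
      t = ∑ j, a j ⊗ₜ[k] (b j ⊗ₜ[k] (c j ⊗ₜ[k] (d j ⊗ₜ[k] e j))) := by
  obtain ⟨m1, a, r, h⟩ := rep2 (k := k) (P := P) (Q := Q ⊗[k] (R ⊗[k] (S ⊗[k] T))) t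
  obtain ⟨m2, b, c, d, e, h2⟩ := rep_fam4 (k := k) r
  refine ⟨m1 * m2,
    fun q => a (finProdFinEquiv.symm q).1,
    fun q => b (finProdFinEquiv.symm q).1 (finProdFinEquiv.symm q).2,
    fun q => c (finProdFinEquiv.symm q).1 (finProdFinEquiv.symm q).2,
    fun q => d (finProdFinEquiv.symm q).1 (finProdFinEquiv.symm q).2,
    fun q => e (finProdFinEquiv.symm q).1 (finProdFinEquiv.symm q).2, ?_⟩
  rw [h]
  calc ∑ j, a j ⊗ₜ[k] r j
      = ∑ j, ∑ l, a j ⊗ₜ[k] (b j l ⊗ₜ[k] (c j l ⊗ₜ[k] (d j l ⊗ₜ[k] e j l))) := by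
        refine Finset.sum_congr rfl fun j _ => ?_
        rw [h2 j, TensorProduct.tmul_sum]
    _ = _ := flatten _

end RepHelpers


open MulOpposite in
/-- under the trivial identifications, the generalized diagonal
crossed products `𝒜 ⋈ 𝔸` and `𝒜 ⧓ 𝔸` coincide with the generalized smash
products `𝒜 ▸< 𝔸₁` and `𝒜 ▸< 𝔸₂` over the quasi-bialgebra `H ⊗ H^op`. -/
theorem statement_6 {k H A M : Type*} [Field k] [Ring H] [Algebra k H]
    [Ring A] [Algebra k A] [AddCommGroup M] [Module k M]
    (Q : QuasiHopfAlgebra k H) (B : BicomoduleAlgebra Q.toQuasiBialgebra A)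
    (MA : BimoduleAlgebra Q.toQuasiBialgebra M)
    (f : H ⊗[k] H) (hf : IsDrinfeldTwist Q f)
    (Om om : H ⊗[k] (H ⊗[k] (A ⊗[k] (H ⊗[k] (H)))))
    (hOm : IsOmegaL Q B f Om) (hom : IsOmegaR Q B f om)
    (K : QuasiBialgebra k (H ⊗[k] Hᵐᵒᵖ)) (hK : IsHHopQB Q.toQuasiBialgebra K)
    -- `𝒜` viewed as a left `H ⊗ H^op`-module algebra :
    (MAK : LeftModuleAlgebra K M)
    (hMAK1 : ∀ (h h' : H) (φ : M),
      MAK.act (h ⊗ₜ[k] op h') φ = MA.actL h (MA.actR φ h'))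
    (hMAK2 : MAK.one = MA.one) (hMAK3 : MAK.mul = MA.mul)
    -- the left `H ⊗ H^op`-comodule algebras `𝔸₁` and `𝔸₂` :
    (A1str : LeftComoduleAlgebra K A)
    (hA1coact : ∀ (u : A) (n : ℕ) (u0 : Fin n → A) (u1 : Fin n → H),
      B.right.coact u = ∑ j, u0 j ⊗ₜ[k] u1 j →
      ∀ (m : ℕ) (v1 : Fin n → Fin m → H) (v2 : Fin n → Fin m → A),
        (∀ j, B.left.coact (u0 j) = ∑ l, v1 j l ⊗ₜ[k] v2 j l) →
      A1str.coact u = ∑ j, ∑ l, (v1 j l ⊗ₜ[k] op (Q.antipodeInv (u1 j))) ⊗ₜ[k] v2 j l)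
    (hA1inv : ∀ (nW : ℕ) (O1 O2 : Fin nW → H) (O3 : Fin nW → A) (O4 O5 : Fin nW → H),
      Om = ∑ w, O1 w ⊗ₜ[k] (O2 w ⊗ₜ[k] (O3 w ⊗ₜ[k] (O4 w ⊗ₜ[k] O5 w))) →
      A1str.PhilInv = ∑ w, (O1 w ⊗ₜ[k] op (O5 w)) ⊗ₜ[k] ((O2 w ⊗ₜ[k] op (O4 w)) ⊗ₜ[k] O3 w))
    (A2str : LeftComoduleAlgebra K A)
    (hA2coact : ∀ (u : A) (n : ℕ) (um : Fin n → H) (u0 : Fin n → A),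
      B.left.coact u = ∑ j, um j ⊗ₜ[k] u0 j →
      ∀ (m : ℕ) (w0 : Fin n → Fin m → A) (w1 : Fin n → Fin m → H),
        (∀ j, B.right.coact (u0 j) = ∑ l, w0 j l ⊗ₜ[k] w1 j l) →
      A2str.coact u = ∑ j, ∑ l, (um j ⊗ₜ[k] op (Q.antipodeInv (w1 j l))) ⊗ₜ[k] w0 j l)
    (hA2inv : ∀ (nV : ℕ) (W1 W2 : Fin nV → H) (W3 : Fin nV → A) (W4 W5 : Fin nV → H),
      om = ∑ w, W1 w ⊗ₜ[k] (W2 w ⊗ₜ[k] (W3 w ⊗ₜ[k] (W4 w ⊗ₜ[k] W5 w))) →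
      A2str.PhilInv = ∑ w, (W1 w ⊗ₜ[k] op (W5 w)) ⊗ₜ[k] ((W2 w ⊗ₜ[k] op (W4 w)) ⊗ₜ[k] W3 w))
    -- the four multiplications :
    (mul1 mul2 mulG1 mulG2 : M ⊗[k] A →ₗ[k] M ⊗[k] A →ₗ[k] M ⊗[k] A)
    (h1 : IsGDCmulL Q B MA Om mul1) (h2 : IsGDCmulR Q B MA om mul2)
    (hG1 : IsGSMmul K MAK A1str mulG1) (hG2 : IsGSMmul K MAK A2str mulG2) :
    mul1 = mulG1 ∧ mul2 = mulG2 := by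
  constructor
  · apply TensorProduct.ext'
    intro φ u
    apply TensorProduct.ext'
    intro φ' u'
    obtain ⟨nO, O1, O2, O3, O4, O5, hOrep⟩ := rep5 (k := k) Om
    obtain ⟨n, u0, u1, hu⟩ := rep2 (k := k) (P := A) (Q := H) (B.right.coact u)
    obtain ⟨m, v1, v2, hv⟩ := rep_fam (k := k) (fun j => B.left.coact (u0 j))
    rw [h1 φ φ' u u' nO O1 O2 O3 O4 O5 hOrep n u0 u1 hu m v1 v2 hv]
    have hPhilInv := hA1inv nO O1 O2 O3 O4 O5 hOrep
    have hco := hA1coact u n u0 u1 hu m v1 v2 hv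
    have hco' : A1str.coact u = ∑ q : Fin (n * m),
        ((v1 (finProdFinEquiv.symm q).1 (finProdFinEquiv.symm q).2
          ⊗ₜ[k] op (Q.antipodeInv (u1 (finProdFinEquiv.symm q).1)))
        ⊗ₜ[k] v2 (finProdFinEquiv.symm q).1 (finProdFinEquiv.symm q).2) := by
      rw [hco]; exact flatten _
    rw [hG1 φ φ' u u' nO
      (fun w => O1 w ⊗ₜ[k] op (O5 w)) (fun w => O2 w ⊗ₜ[k] op (O4 w)) O3 hPhilInv
      (n * m)
      (fun q => v1 (finProdFinEquiv.symm q).1 (finProdFinEquiv.symm q).2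
        ⊗ₜ[k] op (Q.antipodeInv (u1 (finProdFinEquiv.symm q).1)))
      (fun q => v2 (finProdFinEquiv.symm q).1 (finProdFinEquiv.symm q).2) hco']
    refine Finset.sum_congr rfl fun w _ => ?_
    rw [flatten]
    refine Finset.sum_congr rfl fun q _ => ?_
    simp only [hMAK3, Algebra.TensorProduct.tmul_mul_tmul, ← MulOpposite.op_mul,
      hMAK1, MA.act_comm]
  · apply TensorProduct.ext'
    intro φ u
    apply TensorProduct.ext'
    intro φ' u'
    obtain ⟨nO, O1, O2, O3, O4, O5, hOrep⟩ := rep5 (k := k) om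
    obtain ⟨n, um, u0, hu⟩ := rep2 (k := k) (P := H) (Q := A) (B.left.coact u)
    obtain ⟨m, w0, w1, hw⟩ := rep_fam (k := k) (fun j => B.right.coact (u0 j))
    rw [h2 φ φ' u u' nO O1 O2 O3 O4 O5 hOrep n um u0 hu m w0 w1 hw]
    have hPhilInv := hA2inv nO O1 O2 O3 O4 O5 hOrep
    have hco := hA2coact u n um u0 hu m w0 w1 hw
    have hco' : A2str.coact u = ∑ q : Fin (n * m),
        ((um (finProdFinEquiv.symm q).1
          ⊗ₜ[k] op (Q.antipodeInv (w1 (finProdFinEquiv.symm q).1 (finProdFinEquiv.symm q).2)))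
        ⊗ₜ[k] w0 (finProdFinEquiv.symm q).1 (finProdFinEquiv.symm q).2) := by
      rw [hco]; exact flatten _
    rw [hG2 φ φ' u u' nO
      (fun w => O1 w ⊗ₜ[k] op (O5 w)) (fun w => O2 w ⊗ₜ[k] op (O4 w)) O3 hPhilInv
      (n * m)
      (fun q => um (finProdFinEquiv.symm q).1
        ⊗ₜ[k] op (Q.antipodeInv (w1 (finProdFinEquiv.symm q).1 (finProdFinEquiv.symm q).2)))
      (fun q => w0 (finProdFinEquiv.symm q).1 (finProdFinEquiv.symm q).2) hco']
    refine Finset.sum_congr rfl fun w _ => ?_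
    rw [flatten]
    refine Finset.sum_congr rfl fun q _ => ?_
    simp only [hMAK3, Algebra.TensorProduct.tmul_mul_tmul, ← MulOpposite.op_mul,
      hMAK1, MA.act_comm]


end QHA
end
end

section
/- Let H be a quasi-Hopf algebra and B a right H-module algebra, and let H#B be the right smash product, i.e. H⊗B with multiplication (h#b)(h'#b') = hh'₁x¹ # (b·h'₂x²)(b'·x³). Call a vector space M a left (H,B)-module if M is a left H-module (action h▷m), B acts weakly on M from the left (a linear map b⊗m ↦ b·m with 1_B·m = m), and b·(b'·m) = x¹▷([(b·x²)(b'·x³)]·m) and b·(h▷m) = h₁▷[(b·h₂)·m] for all b, b' ∈ B, h ∈ H, m ∈ M. Then the assignments [(h#b)·m := h▷(b·m)] and conversely [h▷m := (h#1_B)·m, b·m := (1_H#b)·m] define mutually inverse bijections between left H#B-module structures and left (H,B)-module structures on M; i.e. the category of left H#B-modules is isomorphic to the category of left (H,B)-modules. -/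
open scoped TensorProduct

set_option maxHeartbeats 2000000
set_option synthInstance.maxHeartbeats 1000000

noncomputable section

namespace QHA

/-- The multiplication of the right smash product `H # B`. -/
def IsRightSmashMul {k H : Type*} [Field k] [Ring H] [Algebra k H]
    {B : Type*} [AddCommGroup B] [Module k B]
    (Q : QuasiBialgebra k H) (MB : RightModuleAlgebra Q B)
    (mul : H ⊗[k] B →ₗ[k] H ⊗[k] B →ₗ[k] H ⊗[k] B) : Prop :=
  ∀ (h h' : H) (b b' : B),
  ∀ (n : ℕ) (x1 x2 x3 : Fin n → H), Q.PhiInv = ∑ i, x1 i ⊗ₜ[k] (x2 i ⊗ₜ[k] x3 i) →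
  ∀ (m : ℕ) (d1 d2 : Fin m → H), Q.comul h' = ∑ j, d1 j ⊗ₜ[k] d2 j →
  mul (h ⊗ₜ[k] b) (h' ⊗ₜ[k] b')
    = ∑ i, ∑ j, (h * d1 j * x1 i) ⊗ₜ[k]
        (MB.mul (MB.act b (d2 j * x2 i)) (MB.act b' (x3 i)))



lemma exists_rep2 {k M N : Type*} [CommRing k] [AddCommGroup M] [Module k M]
    [AddCommGroup N] [Module k N] (t : M ⊗[k] N) :
    ∃ (n : ℕ) (a : Fin n → M) (b : Fin n → N), t = ∑ i, a i ⊗ₜ[k] b i := by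
  obtain ⟨S, hS⟩ := TensorProduct.exists_finset t
  refine ⟨S.card, fun j => ((S.equivFin.symm j) : M × N).1,
    fun j => ((S.equivFin.symm j) : M × N).2, ?_⟩
  rw [hS, ← Finset.sum_attach S (fun i => i.1 ⊗ₜ[k] i.2)]
  exact (Equiv.sum_comp S.equivFin.symm
    (fun i => ((i : M × N).1 ⊗ₜ[k] (i : M × N).2))).symm

lemma pad_sum {M : Type*} [AddCommMonoid M] {m m' : ℕ} (h : m ≤ m') (f : Fin m → M) :
    ∑ j, f j = ∑ j : Fin m', (if h2 : (j : ℕ) < m then f ⟨j, h2⟩ else 0) := by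
  let g : ℕ → M := fun j => if h2 : j < m then f ⟨j, h2⟩ else 0
  calc ∑ j : Fin m, f j
      = ∑ j : Fin m, g (j : ℕ) := Finset.sum_congr rfl fun j _ => by simp [g, j.isLt]
    _ = ∑ j ∈ Finset.range m, g j := Fin.sum_univ_eq_sum_range g m
    _ = ∑ j ∈ Finset.range m', g j := by
        refine Finset.sum_subset (by simpa using h) fun x _ hx => ?_
        simp only [Finset.mem_range, not_lt] at hx
        simp [g, Nat.not_lt.mpr hx]
    _ = ∑ j : Fin m', g (j : ℕ) := (Fin.sum_univ_eq_sum_range g m').symm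
    _ = _ := rfl

lemma exists_rep2_family {k M N : Type*} [CommRing k] [AddCommGroup M] [Module k M]
    [AddCommGroup N] [Module k N] (n : ℕ) (f : Fin n → M ⊗[k] N) :
    ∃ (m : ℕ) (a : Fin n → Fin m → M) (b : Fin n → Fin m → N),
      ∀ i, f i = ∑ j, a i j ⊗ₜ[k] b i j := by
  choose mi ai bi hi using fun i => exists_rep2 (f i)
  refine ⟨Finset.univ.sup mi,
    fun i j => if h2 : (j : ℕ) < mi i then ai i ⟨j, h2⟩ else 0,
    fun i j => if h2 : (j : ℕ) < mi i then bi i ⟨j, h2⟩ else 0, fun i => ?_⟩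
  rw [hi i, pad_sum (Finset.le_sup (Finset.mem_univ i)) (fun j => ai i j ⊗ₜ[k] bi i j)]
  refine Finset.sum_congr rfl fun j _ => ?_
  by_cases h2 : (j : ℕ) < mi i
  · simp [h2]
  · simp [h2]

lemma exists_rep3 {k H : Type*} [CommRing k] [AddCommGroup H] [Module k H]
    (t : H ⊗[k] (H ⊗[k] H)) :
    ∃ (n : ℕ) (a b c : Fin n → H), t = ∑ i, a i ⊗ₜ[k] (b i ⊗ₜ[k] c i) := by
  obtain ⟨n, a, s, h⟩ := exists_rep2 t
  obtain ⟨m, bb, cc, hs⟩ := exists_rep2_family n s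
  refine ⟨n * m, fun q => a (finProdFinEquiv.symm q).1,
    fun q => bb (finProdFinEquiv.symm q).1 (finProdFinEquiv.symm q).2,
    fun q => cc (finProdFinEquiv.symm q).1 (finProdFinEquiv.symm q).2, ?_⟩
  rw [h]
  calc ∑ i, a i ⊗ₜ[k] s i = ∑ i, ∑ j, a i ⊗ₜ[k] (bb i j ⊗ₜ[k] cc i j) := by
        refine Finset.sum_congr rfl fun i _ => ?_
        rw [hs i, TensorProduct.tmul_sum]
    _ = ∑ p : Fin n × Fin m, a p.1 ⊗ₜ[k] (bb p.1 p.2 ⊗ₜ[k] cc p.1 p.2) := by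
        rw [← Finset.sum_product']; rfl
    _ = _ := (Equiv.sum_comp finProdFinEquiv.symm
        (fun p : Fin n × Fin m => a p.1 ⊗ₜ[k] (bb p.1 p.2 ⊗ₜ[k] cc p.1 p.2))).symm

section Aux
variable {k H : Type*} [Field k] [Ring H] [Algebra k H] (Q : QuasiBialgebra k H)

/-- `h ↦ ε(h)•1` as an algebra hom. -/
def epsH : H →ₐ[k] H := (Algebra.ofId k H).comp Q.counit

lemma epsH_apply (h : H) : epsH Q h = Q.counit h • (1 : H) := by
  simp [epsH, Algebra.ofId_apply, Algebra.algebraMap_eq_smul_one]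

/-- `a ⊗ b ↦ ε(a)•b`. -/
def Vl : H ⊗[k] H →ₐ[k] H :=
  Algebra.TensorProduct.lift (epsH Q) (AlgHom.id k H)
    (fun x y => Algebra.commutes (Q.counit x) y)

/-- `a ⊗ b ↦ ε(b)•a`. -/
def Vr : H ⊗[k] H →ₐ[k] H :=
  Algebra.TensorProduct.lift (AlgHom.id k H) (epsH Q)
    (fun x y => (Algebra.commutes (Q.counit y) x).symm)

lemma Vl_tmul (a b : H) : Vl Q (a ⊗ₜ[k] b) = Q.counit a • b := by
  change epsH Q a * (AlgHom.id k H) b = _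
  simp [Vl, Algebra.TensorProduct.lift_tmul, epsH_apply, smul_mul_assoc]

lemma Vr_tmul (a b : H) : Vr Q (a ⊗ₜ[k] b) = Q.counit b • a := by
  change (AlgHom.id k H) a * epsH Q b = _
  simp [Vr, Algebra.TensorProduct.lift_tmul, epsH_apply, mul_smul_comm]

lemma Vl_comul (h : H) : Vl Q (Q.comul h) = h := by
  obtain ⟨n, a, b, hr⟩ := exists_rep2 (Q.comul h)
  rw [hr, map_sum]
  simp only [Vl_tmul]
  exact Q.counit_comul_left h n a b hr

lemma Vr_comul (h : H) : Vr Q (Q.comul h) = h := by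
  obtain ⟨n, a, b, hr⟩ := exists_rep2 (Q.comul h)
  rw [hr, map_sum]
  simp only [Vr_tmul]
  exact Q.counit_comul_right h n a b hr

/-- `(id ⊗ ε ⊗ id)`. -/
def P2 : H ⊗[k] (H ⊗[k] H) →ₐ[k] H ⊗[k] H :=
  Algebra.TensorProduct.map (AlgHom.id k H) (Vl Q)

/-- `(id ⊗ id ⊗ ε)`. -/
def P3 : H ⊗[k] (H ⊗[k] H) →ₐ[k] H ⊗[k] H :=
  Algebra.TensorProduct.map (AlgHom.id k H) (Vr Q)

lemma P2_sum (n : ℕ) (a b c : Fin n → H) :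
    P2 Q (∑ i, a i ⊗ₜ[k] (b i ⊗ₜ[k] c i)) = ∑ i, Q.counit (b i) • (a i ⊗ₜ[k] c i) := by
  rw [map_sum]
  exact Finset.sum_congr rfl fun i _ => by
    simp [P2, Algebra.TensorProduct.map_tmul, Vl_tmul, TensorProduct.tmul_smul]

lemma P3_sum (n : ℕ) (a b c : Fin n → H) :
    P3 Q (∑ i, a i ⊗ₜ[k] (b i ⊗ₜ[k] c i)) = ∑ i, Q.counit (c i) • (a i ⊗ₜ[k] b i) := by
  rw [map_sum]
  exact Finset.sum_congr rfl fun i _ => by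
    simp [P3, Algebra.TensorProduct.map_tmul, Vr_tmul, TensorProduct.tmul_smul]

lemma P2_Phi : P2 Q Q.Phi = 1 := by
  obtain ⟨n, a, b, c, hr⟩ := exists_rep3 Q.Phi
  rw [hr, P2_sum]
  exact Q.Phi_normal n a b c hr

lemma P2_PhiInv : P2 Q Q.PhiInv = 1 := by
  calc P2 Q Q.PhiInv = P2 Q Q.PhiInv * P2 Q Q.Phi := by rw [P2_Phi, mul_one]
    _ = P2 Q (Q.PhiInv * Q.Phi) := (map_mul _ _ _).symm
    _ = 1 := by rw [Q.Phi_inv_mul, map_one]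

lemma P3_Phi : P3 Q Q.Phi = 1 := by
  obtain ⟨nP, X1, X2, X3, hP⟩ := exists_rep3 Q.Phi
  obtain ⟨m, c1, c2, hc⟩ := exists_rep2_family nP (fun i => Q.comul (X2 i))
  obtain ⟨p, d1, d2, hd⟩ := exists_rep2_family nP (fun i => Q.comul (X1 i))
  have pent := Q.pentagon nP X1 X2 X3 hP m c1 c2 hc p d1 d2 hd
  set F : H ⊗[k] (H ⊗[k] (H ⊗[k] H)) →ₐ[k] H ⊗[k] (H ⊗[k] H) :=
    Algebra.TensorProduct.map (AlgHom.id k H) (P2 Q) with hF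
  have h1 : F ((1 : H) ⊗ₜ[k] Q.Phi) = 1 := by
    rw [hF, Algebra.TensorProduct.map_tmul, AlgHom.coe_id, id_eq, P2_Phi,
      ← Algebra.TensorProduct.one_def]
  have h2 : F (∑ i, ∑ j, X1 i ⊗ₜ[k] (c1 i j ⊗ₜ[k] (c2 i j ⊗ₜ[k] X3 i))) = Q.Phi := by
    rw [map_sum, hP]
    refine Finset.sum_congr rfl fun i _ => ?_
    rw [map_sum]
    calc ∑ j, F (X1 i ⊗ₜ[k] (c1 i j ⊗ₜ[k] (c2 i j ⊗ₜ[k] X3 i)))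
        = ∑ j, X1 i ⊗ₜ[k] ((Q.counit (c2 i j) • c1 i j) ⊗ₜ[k] X3 i) := by
          refine Finset.sum_congr rfl fun j _ => ?_
          simp [hF, Algebra.TensorProduct.map_tmul, P2, Vl_tmul,
            TensorProduct.smul_tmul, TensorProduct.tmul_smul]
      _ = X1 i ⊗ₜ[k] ((∑ j, Q.counit (c2 i j) • c1 i j) ⊗ₜ[k] X3 i) := by
          rw [TensorProduct.sum_tmul, TensorProduct.tmul_sum]
      _ = X1 i ⊗ₜ[k] (X2 i ⊗ₜ[k] X3 i) := by
          rw [Q.counit_comul_right (X2 i) m (c1 i) (c2 i) (hc i)]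
  have h3 : F (∑ i, X1 i ⊗ₜ[k] (X2 i ⊗ₜ[k] (X3 i ⊗ₜ[k] (1 : H))))
      = ∑ i, Q.counit (X3 i) • (X1 i ⊗ₜ[k] (X2 i ⊗ₜ[k] (1 : H))) := by
    rw [map_sum]
    refine Finset.sum_congr rfl fun i _ => ?_
    simp [hF, Algebra.TensorProduct.map_tmul, P2, Vl_tmul,
      TensorProduct.smul_tmul, TensorProduct.tmul_smul]
  have h4 : F (∑ i, X1 i ⊗ₜ[k] (X2 i ⊗ₜ[k] Q.comul (X3 i))) = Q.Phi := by
    rw [map_sum, hP]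
    refine Finset.sum_congr rfl fun i _ => ?_
    rw [hF, Algebra.TensorProduct.map_tmul, AlgHom.coe_id, id_eq]
    congr 1
    rw [P2, Algebra.TensorProduct.map_tmul, AlgHom.coe_id, id_eq, Vl_comul]
  have h5 : F (∑ i, ∑ j, d1 i j ⊗ₜ[k] (d2 i j ⊗ₜ[k] (X2 i ⊗ₜ[k] X3 i))) = 1 := by
    set K : H ⊗[k] H →ₐ[k] H ⊗[k] (H ⊗[k] H) :=
      ((Algebra.TensorProduct.assoc k k k H H H : (H ⊗[k] H) ⊗[k] H ≃ₐ[k] H ⊗[k] (H ⊗[k] H)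
        ).toAlgHom.comp (Algebra.TensorProduct.map Q.comul (AlgHom.id k H))) with hK
    have hKi : ∀ i, K (X1 i ⊗ₜ[k] X3 i) = ∑ j, d1 i j ⊗ₜ[k] (d2 i j ⊗ₜ[k] X3 i) := by
      intro i
      rw [hK, AlgHom.comp_apply, Algebra.TensorProduct.map_tmul, AlgHom.coe_id, id_eq,
        hd i, TensorProduct.sum_tmul, map_sum]
      exact Finset.sum_congr rfl fun j _ => by
        simp [Algebra.TensorProduct.assoc_tmul]
    calc F (∑ i, ∑ j, d1 i j ⊗ₜ[k] (d2 i j ⊗ₜ[k] (X2 i ⊗ₜ[k] X3 i)))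
        = ∑ i, Q.counit (X2 i) • K (X1 i ⊗ₜ[k] X3 i) := by
          rw [map_sum]
          refine Finset.sum_congr rfl fun i _ => ?_
          rw [map_sum, hKi i, Finset.smul_sum]
          refine Finset.sum_congr rfl fun j _ => ?_
          simp [hF, Algebra.TensorProduct.map_tmul, P2, Vl_tmul,
            TensorProduct.smul_tmul, TensorProduct.tmul_smul]
      _ = K (∑ i, Q.counit (X2 i) • (X1 i ⊗ₜ[k] X3 i)) := by
          rw [map_sum]
          exact Finset.sum_congr rfl fun i _ => (map_smul K _ _).symm
      _ = 1 := by rw [Q.Phi_normal nP X1 X2 X3 hP, map_one]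
  have h6 : Q.Phi * (∑ i, Q.counit (X3 i) • (X1 i ⊗ₜ[k] (X2 i ⊗ₜ[k] (1 : H)))) = Q.Phi := by
    have := congrArg F pent
    rw [map_mul, map_mul, map_mul, h1, h2, h3, h4, h5, one_mul, mul_one] at this
    exact this
  have h7 : (∑ i, Q.counit (X3 i) • (X1 i ⊗ₜ[k] (X2 i ⊗ₜ[k] (1 : H)))) = 1 := by
    calc (∑ i, Q.counit (X3 i) • (X1 i ⊗ₜ[k] (X2 i ⊗ₜ[k] (1 : H))))
        = (Q.PhiInv * Q.Phi) * (∑ i, Q.counit (X3 i) • (X1 i ⊗ₜ[k] (X2 i ⊗ₜ[k] (1 : H)))) := by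
          rw [Q.Phi_inv_mul, one_mul]
      _ = Q.PhiInv * (Q.Phi * (∑ i, Q.counit (X3 i) • (X1 i ⊗ₜ[k] (X2 i ⊗ₜ[k] (1 : H))))) :=
          mul_assoc _ _ _
      _ = 1 := by rw [h6, Q.Phi_inv_mul]
  have h8 := congrArg (P3 Q) h7
  rw [map_sum, map_one] at h8
  rw [hP, P3_sum]
  rw [← h8]
  refine Finset.sum_congr rfl fun i _ => ?_
  rw [map_smul, P3, Algebra.TensorProduct.map_tmul, AlgHom.coe_id, id_eq, Vr_tmul,
    map_one, one_smul]

lemma P3_PhiInv : P3 Q Q.PhiInv = 1 := by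
  calc P3 Q Q.PhiInv = P3 Q Q.PhiInv * P3 Q Q.Phi := by rw [P3_Phi, mul_one]
    _ = P3 Q (Q.PhiInv * Q.Phi) := (map_mul _ _ _).symm
    _ = 1 := by rw [Q.Phi_inv_mul, map_one]

lemma inv_normal_mid (n : ℕ) (x1 x2 x3 : Fin n → H)
    (hI : Q.PhiInv = ∑ i, x1 i ⊗ₜ[k] (x2 i ⊗ₜ[k] x3 i)) :
    (∑ i, Q.counit (x2 i) • (x1 i ⊗ₜ[k] x3 i)) = 1 := by
  have := P2_PhiInv Q
  rwa [hI, P2_sum] at this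

lemma inv_normal_right (n : ℕ) (x1 x2 x3 : Fin n → H)
    (hI : Q.PhiInv = ∑ i, x1 i ⊗ₜ[k] (x2 i ⊗ₜ[k] x3 i)) :
    (∑ i, Q.counit (x3 i) • (x1 i ⊗ₜ[k] x2 i)) = 1 := by
  have := P3_PhiInv Q
  rwa [hI, P3_sum] at this

lemma inv_normal_23 (n : ℕ) (x1 x2 x3 : Fin n → H)
    (hI : Q.PhiInv = ∑ i, x1 i ⊗ₜ[k] (x2 i ⊗ₜ[k] x3 i)) :
    (∑ i, (Q.counit (x2 i) * Q.counit (x3 i)) • x1 i) = 1 := by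
  have h := congrArg (Vr Q) (inv_normal_right Q n x1 x2 x3 hI)
  rw [map_sum, map_one] at h
  rw [← h]
  refine Finset.sum_congr rfl fun i _ => ?_
  rw [map_smul, Vr_tmul, smul_smul, mul_comm]

end Aux


section Smash
variable {k H B : Type*} [Field k] [Ring H] [Algebra k H]
  [AddCommGroup B] [Module k B]
variable (Q : QuasiBialgebra k H) (MB : RightModuleAlgebra Q B)
variable (mulS : H ⊗[k] B →ₗ[k] H ⊗[k] B →ₗ[k] H ⊗[k] B)

lemma comul_one_rep : Q.comul (1 : H)
    = ∑ _j : Fin 1, (1 : H) ⊗ₜ[k] (1 : H) := by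
  simp [Algebra.TensorProduct.one_def]

lemma mulS_tmul_one_left (hmulS : IsRightSmashMul Q MB mulS) (h : H) (c : B) :
    mulS (h ⊗ₜ[k] MB.one) ((1 : H) ⊗ₜ[k] c) = h ⊗ₜ[k] c := by
  obtain ⟨n, x1, x2, x3, hI⟩ := exists_rep3 Q.PhiInv
  rw [hmulS h 1 MB.one c n x1 x2 x3 hI 1 (fun _ => 1) (fun _ => 1) (comul_one_rep Q)]
  have key := congrArg (TensorProduct.map (LinearMap.mulLeft k h) (MB.act c))
    (inv_normal_mid Q n x1 x2 x3 hI)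
  rw [map_sum] at key
  simp only [Algebra.TensorProduct.one_def, TensorProduct.map_tmul, map_smul,
    LinearMap.mulLeft_apply, mul_one, MB.act_one] at key
  rw [← key]
  refine Finset.sum_congr rfl fun i _ => ?_
  rw [Fin.sum_univ_one, mul_one, one_mul, MB.act_unit, map_smul, LinearMap.smul_apply,
    MB.oneMul, TensorProduct.tmul_smul]

lemma mulS_one_one (hmulS : IsRightSmashMul Q MB mulS) (g h : H) :
    mulS (g ⊗ₜ[k] MB.one) (h ⊗ₜ[k] MB.one) = (g * h) ⊗ₜ[k] MB.one := by
  obtain ⟨n, x1, x2, x3, hI⟩ := exists_rep3 Q.PhiInv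
  obtain ⟨m, d1, d2, hd⟩ := exists_rep2 (Q.comul h)
  rw [hmulS g h MB.one MB.one n x1 x2 x3 hI m d1 d2 hd]
  have inner : ∀ u : H,
      ∑ j, Q.counit (d2 j) • ((g * d1 j * u) ⊗ₜ[k] MB.one) = (g * h * u) ⊗ₜ[k] MB.one := by
    intro u
    have := congrArg (((TensorProduct.mk k H B).flip MB.one).comp
      ((LinearMap.mulRight k u).comp (LinearMap.mulLeft k g)))
      (Q.counit_comul_right h m d1 d2 hd)
    rw [map_sum] at this
    simpa [TensorProduct.mk_apply] using this
  have outer := congrArg (((TensorProduct.mk k H B).flip MB.one).comp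
      (LinearMap.mulLeft k (g * h))) (inv_normal_23 Q n x1 x2 x3 hI)
  rw [map_sum] at outer
  simp only [LinearMap.comp_apply, LinearMap.mulLeft_apply, LinearMap.flip_apply,
    TensorProduct.mk_apply, map_smul, mul_one] at outer
  calc ∑ i, ∑ j, (g * d1 j * x1 i) ⊗ₜ[k]
        (MB.mul (MB.act MB.one (d2 j * x2 i)) (MB.act MB.one (x3 i)))
      = ∑ i, (Q.counit (x2 i) * Q.counit (x3 i)) •
          ∑ j, Q.counit (d2 j) • ((g * d1 j * x1 i) ⊗ₜ[k] MB.one) := by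
        refine Finset.sum_congr rfl fun i _ => ?_
        rw [Finset.smul_sum]
        refine Finset.sum_congr rfl fun j _ => ?_
        simp [MB.act_unit, map_mul, map_smul, LinearMap.smul_apply, MB.mulOne,
          TensorProduct.tmul_smul, smul_smul, mul_comm, mul_left_comm]
    _ = ∑ i, (Q.counit (x2 i) * Q.counit (x3 i)) • ((g * h * x1 i) ⊗ₜ[k] MB.one) := by
        exact Finset.sum_congr rfl fun i _ => by rw [inner (x1 i)]
    _ = (g * h) ⊗ₜ[k] MB.one := by
        rw [← outer]

lemma mulS_b_h (hmulS : IsRightSmashMul Q MB mulS) (b : B) (h : H)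
    (m : ℕ) (d1 d2 : Fin m → H) (hd : Q.comul h = ∑ j, d1 j ⊗ₜ[k] d2 j) :
    mulS ((1 : H) ⊗ₜ[k] b) (h ⊗ₜ[k] MB.one) = ∑ j, d1 j ⊗ₜ[k] MB.act b (d2 j) := by
  obtain ⟨n, x1, x2, x3, hI⟩ := exists_rep3 Q.PhiInv
  rw [hmulS 1 h b MB.one n x1 x2 x3 hI m d1 d2 hd, Finset.sum_comm]
  refine Finset.sum_congr rfl fun j _ => ?_
  have key := congrArg (TensorProduct.map (LinearMap.mulLeft k (d1 j))
      ((MB.act b).comp (LinearMap.mulLeft k (d2 j)))) (inv_normal_right Q n x1 x2 x3 hI)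
  rw [map_sum] at key
  simp only [Algebra.TensorProduct.one_def, TensorProduct.map_tmul, map_smul,
    LinearMap.mulLeft_apply, LinearMap.comp_apply, mul_one] at key
  rw [← key]
  refine Finset.sum_congr rfl fun i _ => ?_
  rw [one_mul, MB.act_unit, map_smul, MB.mulOne, TensorProduct.tmul_smul]

lemma mulS_b_b (hmulS : IsRightSmashMul Q MB mulS) (b b' : B)
    (n : ℕ) (x1 x2 x3 : Fin n → H)
    (hI : Q.PhiInv = ∑ i, x1 i ⊗ₜ[k] (x2 i ⊗ₜ[k] x3 i)) :
    mulS ((1 : H) ⊗ₜ[k] b) ((1 : H) ⊗ₜ[k] b')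
      = ∑ i, x1 i ⊗ₜ[k] MB.mul (MB.act b (x2 i)) (MB.act b' (x3 i)) := by
  rw [hmulS 1 1 b b' n x1 x2 x3 hI 1 (fun _ => 1) (fun _ => 1) (comul_one_rep Q)]
  refine Finset.sum_congr rfl fun i _ => ?_
  rw [Fin.sum_univ_one, one_mul, one_mul, one_mul]

end Smash


/-- left `H#B`-module structures on `M` correspond bijectively to
left `(H,B)`-module structures on `M`, via `(h#b)·m = h▷(b·m)` and conversely
`h▷m = (h#1)·m`, `b·m = (1#b)·m`. -/
theorem statement_19 {k H B M : Type*} [Field k] [Ring H] [Algebra k H]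
    [AddCommGroup B] [Module k B] [AddCommGroup M] [Module k M]
    (Q : QuasiHopfAlgebra k H) (MB : RightModuleAlgebra Q.toQuasiBialgebra B)
    (mulS : H ⊗[k] B →ₗ[k] H ⊗[k] B →ₗ[k] H ⊗[k] B)
    (hmulS : IsRightSmashMul Q.toQuasiBialgebra MB mulS) :
    -- From `(H,B)`-module structures to `H#B`-module structures:
    (∀ (hact : H →ₗ[k] M →ₗ[k] M) (bact : B →ₗ[k] M →ₗ[k] M),
      (∀ m : M, hact 1 m = m) →
      (∀ (g h : H) (m : M), hact (g * h) m = hact g (hact h m)) →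
      (∀ m : M, bact MB.one m = m) →
      (∀ (b b' : B) (m : M) (n : ℕ) (x1 x2 x3 : Fin n → H),
        Q.PhiInv = ∑ i, x1 i ⊗ₜ[k] (x2 i ⊗ₜ[k] x3 i) →
        bact b (bact b' m)
          = ∑ i, hact (x1 i) (bact (MB.mul (MB.act b (x2 i)) (MB.act b' (x3 i))) m)) →
      (∀ (b : B) (h : H) (m : M) (n : ℕ) (d1 d2 : Fin n → H),
        Q.comul h = ∑ i, d1 i ⊗ₜ[k] d2 i →
        bact b (hact h m) = ∑ i, hact (d1 i) (bact (MB.act b (d2 i)) m)) →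
      ∀ (sm : H ⊗[k] B →ₗ[k] M →ₗ[k] M),
        (∀ (h : H) (b : B) (m : M), sm (h ⊗ₜ[k] b) m = hact h (bact b m)) →
        (∀ m : M, sm ((1 : H) ⊗ₜ[k] MB.one) m = m)
        ∧ (∀ (x y : H ⊗[k] B) (m : M), sm (mulS x y) m = sm x (sm y m))
        ∧ (∀ (h : H) (m : M), sm (h ⊗ₜ[k] MB.one) m = hact h m)
        ∧ (∀ (b : B) (m : M), sm ((1 : H) ⊗ₜ[k] b) m = bact b m))
    ∧
    -- From `H#B`-module structures to `(H,B)`-module structures: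
    (∀ (sm : H ⊗[k] B →ₗ[k] M →ₗ[k] M),
      (∀ m : M, sm ((1 : H) ⊗ₜ[k] MB.one) m = m) →
      (∀ (x y : H ⊗[k] B) (m : M), sm (mulS x y) m = sm x (sm y m)) →
      ∀ (hact : H →ₗ[k] M →ₗ[k] M) (bact : B →ₗ[k] M →ₗ[k] M),
        (∀ (h : H) (m : M), hact h m = sm (h ⊗ₜ[k] MB.one) m) →
        (∀ (b : B) (m : M), bact b m = sm ((1 : H) ⊗ₜ[k] b) m) →
        (∀ m : M, hact 1 m = m)
        ∧ (∀ (g h : H) (m : M), hact (g * h) m = hact g (hact h m))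
        ∧ (∀ m : M, bact MB.one m = m)
        ∧ (∀ (b b' : B) (m : M) (n : ℕ) (x1 x2 x3 : Fin n → H),
            Q.PhiInv = ∑ i, x1 i ⊗ₜ[k] (x2 i ⊗ₜ[k] x3 i) →
            bact b (bact b' m)
              = ∑ i, hact (x1 i) (bact (MB.mul (MB.act b (x2 i)) (MB.act b' (x3 i))) m))
        ∧ (∀ (b : B) (h : H) (m : M) (n : ℕ) (d1 d2 : Fin n → H),
            Q.comul h = ∑ i, d1 i ⊗ₜ[k] d2 i →
            bact b (hact h m) = ∑ i, hact (d1 i) (bact (MB.act b (d2 i)) m))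
        ∧ (∀ (h : H) (b : B) (m : M), sm (h ⊗ₜ[k] b) m = hact h (bact b m))) := by
  constructor
  · -- (H,B)-module ⟹ H#B-module
    intro hact bact h1 h2 h3 h4 h5 sm hsm
    have pure : ∀ (h : H) (b : B) (h' : H) (b' : B) (m : M),
        sm (mulS (h ⊗ₜ[k] b) (h' ⊗ₜ[k] b')) m = sm (h ⊗ₜ[k] b) (sm (h' ⊗ₜ[k] b') m) := by
      intro h b h' b' m
      obtain ⟨n, x1, x2, x3, hI⟩ := exists_rep3 Q.toQuasiBialgebra.PhiInv
      obtain ⟨nd, d1, d2, hd⟩ := exists_rep2 (Q.toQuasiBialgebra.comul h')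
      have hL : sm (mulS (h ⊗ₜ[k] b) (h' ⊗ₜ[k] b')) m
          = ∑ i, ∑ j, hact (h * d1 j * x1 i)
              (bact (MB.mul (MB.act b (d2 j * x2 i)) (MB.act b' (x3 i))) m) := by
        rw [hmulS h h' b b' n x1 x2 x3 hI nd d1 d2 hd]
        simp [map_sum, LinearMap.sum_apply, hsm]
      rw [hL, hsm, hsm, h5 b h' (bact b' m) nd d1 d2 hd, map_sum, Finset.sum_comm]
      refine Finset.sum_congr rfl fun j _ => ?_
      rw [h4 (MB.act b (d2 j)) b' m n x1 x2 x3 hI, map_sum, map_sum]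
      refine Finset.sum_congr rfl fun i _ => ?_
      rw [← MB.act_mul, ← h2, ← h2]
    refine ⟨fun m => by rw [hsm, h3, h1], ?_, fun h m => by rw [hsm, h3],
      fun b m => by rw [hsm, h1]⟩
    intro x y m
    induction x using TensorProduct.induction_on with
    | zero => simp
    | tmul h b =>
      induction y using TensorProduct.induction_on with
      | zero => simp
      | tmul h' b' => exact pure h b h' b' m
      | add y1 y2 iy1 iy2 => simp [map_add, LinearMap.add_apply, iy1, iy2]
    | add x1 x2 ix1 ix2 => simp [map_add, LinearMap.add_apply, ix1, ix2]
  · -- H#B-module ⟹ (H,B)-module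
    intro sm hone hassoc hact bact hha hba
    refine ⟨fun m => by rw [hha, hone], ?_, fun m => by rw [hba, hone], ?_, ?_, ?_⟩
    · intro g h m
      rw [hha, hha, hha, ← hassoc,
        mulS_one_one Q.toQuasiBialgebra MB mulS hmulS g h]
    · intro b b' m n x1 x2 x3 hI
      rw [hba, hba, ← hassoc, mulS_b_b Q.toQuasiBialgebra MB mulS hmulS b b' n x1 x2 x3 hI,
        map_sum, LinearMap.sum_apply]
      refine Finset.sum_congr rfl fun i _ => ?_
      rw [hha, hba, ← hassoc,
        mulS_tmul_one_left Q.toQuasiBialgebra MB mulS hmulS (x1 i)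
          (MB.mul (MB.act b (x2 i)) (MB.act b' (x3 i)))]
    · intro b h m n d1 d2 hd
      rw [hba, hha, ← hassoc, mulS_b_h Q.toQuasiBialgebra MB mulS hmulS b h n d1 d2 hd,
        map_sum, LinearMap.sum_apply]
      refine Finset.sum_congr rfl fun j _ => ?_
      rw [hha, hba, ← hassoc,
        mulS_tmul_one_left Q.toQuasiBialgebra MB mulS hmulS (d1 j) (MB.act b (d2 j))]
    · intro h b m
      rw [hha, hba, ← hassoc,
        mulS_tmul_one_left Q.toQuasiBialgebra MB mulS hmulS h b]


end QHA
end
end
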